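/- arXiv:1602.03519 — 3 statements merged into one kernel-verified Lean document; each statement's English description precedes it below -/
import Mathlib

section
/- Let f : ℝ → ℝ be twice continuously differentiable with f ∈ L²(ℝ), and suppose that −f''(y) + f(y) − 5·Q(y)^4·f(y) = 0 for all y ∈ ℝ. Then there exists a ∈ ℝ such that f = a·Q'. -/
/-!
Differentiating `Q'' = Q - Q⁵` shows that `Q'` lies in the kernel. For `f` in the kernel the
Wronskian `W = f Q'' - f' Q'` is constant and `(f Q')' = 2 f Q'' - W`. As `Q'' ∈ L²`, `f Q''` is
integrable, so `W ≠ 0` would make `|f Q'|` grow linearly; since `Q'` is bounded this forces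
`|f| ≥ 1` near `+∞`, contradicting `f ∈ L²`. Hence `W = 0`, and at `0`, where `Q' = 0 ≠ Q''`,
this gives `f 0 = 0`. Then `f` and `a Q'` with `a = f'(0) / Q''(0)` solve the same second-order
linear equation with the same data at `0`, so they coincide.
-/

open MeasureTheory

noncomputable def Q (x : ℝ) : ℝ := (3 / (Real.cosh (2 * x)) ^ 2) ^ ((1 : ℝ) / 4)

open Real Filter

theorem not_eventually_one_le_of_integrable {g : ℝ → ℝ} (hg : Integrable g) :
    ¬∀ᶠ x in atTop, 1 ≤ g x := by
  intro h
  obtain ⟨T, hT⟩ := eventually_atTop.mp h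
  have hone : IntegrableOn (fun _ => (1 : ℝ)) (Set.Ioi T) :=
    hg.integrableOn.mono' aestronglyMeasurable_const
      (ae_restrict_of_forall_mem measurableSet_Ioi fun x hx => by
        simpa using hT x (le_of_lt hx))
  simp at hone

theorem tendsto_abs_atTop_of_hasDerivAt_sub_const {F G : ℝ → ℝ} {c : ℝ}
    (hF : ∀ t, HasDerivAt F (G t - c) t) (hG : Integrable G) (hc : c ≠ 0) :
    Tendsto (fun t => |F t|) atTop atTop := by
  have hFTC (T : ℝ) : F T - F 0 = (∫ t in (0 : ℝ)..T, G t) - c * T := by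
    rw [← intervalIntegral.integral_eq_sub_of_hasDerivAt (fun t _ => hF t)
      (hG.intervalIntegrable.sub intervalIntegrable_const), intervalIntegral.integral_sub
      hG.intervalIntegrable intervalIntegrable_const, intervalIntegral.integral_const,
      smul_eq_mul, sub_zero, mul_comm]
  have hbound {T : ℝ} (hT : 0 ≤ T) : |∫ t in (0 : ℝ)..T, G t| ≤ ∫ t, |G t| :=
    (intervalIntegral.abs_integral_le_integral_abs hT).trans <| by
      rw [intervalIntegral.integral_of_le hT]
      exact setIntegral_le_integral hG.abs (ae_of_all _ fun _ => abs_nonneg _)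
  refine tendsto_atTop_mono' _ ?_ <| tendsto_atTop_add_const_right _ (-(|F 0| + ∫ t, |G t|))
    (tendsto_id.const_mul_atTop (abs_pos.mpr hc))
  filter_upwards [eventually_ge_atTop 0] with T hT
  have hcT : c * T = (∫ t in (0 : ℝ)..T, G t) + -F T + F 0 := by linarith [hFTC T]
  have htri := abs_add_three (∫ t in (0 : ℝ)..T, G t) (-F T) (F 0)
  rw [abs_neg, ← hcT, abs_mul, abs_of_nonneg hT] at htri
  simp only [id]
  linarith [hbound hT]

section SecondOrderLinear

def wronskian (u u' v v' : ℝ → ℝ) (t : ℝ) : ℝ := u t * v' t - u' t * v t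

variable {p u u' v v' : ℝ → ℝ}

theorem wronskian_const (hu : ∀ t, HasDerivAt u (u' t) t)
    (hu' : ∀ t, HasDerivAt u' (p t * u t) t) (hv : ∀ t, HasDerivAt v (v' t) t)
    (hv' : ∀ t, HasDerivAt v' (p t * v t) t) (t s : ℝ) :
    wronskian u u' v v' t = wronskian u u' v v' s := by
  have hW (t : ℝ) : HasDerivAt (wronskian u u' v v') 0 t :=
    (((hu t).mul (hv' t)).sub ((hu' t).mul (hv t))).congr_deriv (by ring)
  exact is_const_of_deriv_eq_zero (fun t => (hW t).differentiableAt) (fun t => (hW t).deriv) t s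

theorem ODE_secondOrderLinear_unique {M : ℝ} (hp : ∀ t, |p t| ≤ M)
    (hu : ∀ t, HasDerivAt u (u' t) t) (hu' : ∀ t, HasDerivAt u' (p t * u t) t)
    (hv : ∀ t, HasDerivAt v (v' t) t) (hv' : ∀ t, HasDerivAt v' (p t * v t) t) {t₀ : ℝ}
    (h₀ : u t₀ = v t₀) (h₀' : u' t₀ = v' t₀) : u = v := by
  have hlip (t : ℝ) : LipschitzWith (max 1 M.toNNReal) fun x : ℝ × ℝ => (x.2, p t * x.1) := by
    refine (LipschitzWith.prod_snd.prodMk ((lipschitzWith_smul (p t)).comp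
      LipschitzWith.prod_fst)).weaken (max_le_max le_rfl ?_)
    rw [mul_one, ← NNReal.coe_le_coe, coe_nnnorm, Real.coe_toNNReal']
    exact (hp t).trans (le_max_left _ _)
  have hsystem := ODE_solution_unique_univ (s := fun _ => Set.univ) (t₀ := t₀)
    (fun t => (hlip t).lipschitzOnWith) (f := fun t => (u t, u' t)) (g := fun t => (v t, v' t))
    (fun t => ⟨(hu t).prodMk (hu' t), trivial⟩) (fun t => ⟨(hv t).prodMk (hv' t), trivial⟩)
    (Prod.ext h₀ h₀')
  exact funext fun t => congrArg Prod.fst (congrFun hsystem t)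

theorem wronskian_eq_zero_of_memLp {M : ℝ} (hu : ∀ t, HasDerivAt u (u' t) t)
    (hu' : ∀ t, HasDerivAt u' (p t * u t) t) (hv : ∀ t, HasDerivAt v (v' t) t)
    (hv' : ∀ t, HasDerivAt v' (p t * v t) t) (hu₂ : MemLp u 2) (hvM : ∀ t, |v t| ≤ M)
    (hv'₂ : MemLp v' 2) (t : ℝ) : wronskian u u' v v' t = 0 := by
  have hW := wronskian_const hu hu' hv hv'
  rw [hW t 0]
  by_contra hc
  have hF (t : ℝ) : HasDerivAt (fun t => u t * v t)
      (2 * (u * v') t - wronskian u u' v v' 0) t :=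
    ((hu t).mul (hv t)).congr_deriv (by rw [← hW t 0, wronskian, Pi.mul_apply]; ring)
  have hgrowth := tendsto_abs_atTop_of_hasDerivAt_sub_const hF
    ((hu₂.integrable_mul hv'₂).const_mul 2) hc
  refine not_eventually_one_le_of_integrable ((memLp_two_iff_integrable_sq hu₂.1).mp hu₂) ?_
  filter_upwards [hgrowth.eventually_ge_atTop (|M| + 1)] with t ht
  have hle : |u t * v t| ≤ |u t| * |M| := by
    rw [abs_mul]; exact mul_le_mul_of_nonneg_left ((hvM t).trans (le_abs_self M)) (abs_nonneg _)
  have h1 : 1 ≤ |u t| := by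
    by_contra! h
    nlinarith [abs_nonneg M, abs_nonneg (u t)]
  exact one_le_sq_iff_one_le_abs _ |>.mpr h1

end SecondOrderLinear

/-- `Q = 3^{1/4} · sqrtSechTwoMul`; together with `cosh (2x) · sqrtSechTwoMul x ^ 2 = 1` this
turns the calculus of `Q` into polynomial identities. -/
noncomputable def sqrtSechTwoMul (x : ℝ) : ℝ := cosh (2 * x) ^ (-(1 : ℝ) / 2)

lemma sqrtSechTwoMul_pos (x : ℝ) : 0 < sqrtSechTwoMul x := rpow_pos_of_pos (cosh_pos _) _

lemma sqrtSechTwoMul_le_one (x : ℝ) : sqrtSechTwoMul x ≤ 1 :=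
  rpow_le_one_of_one_le_of_nonpos (one_le_cosh _) (by norm_num)

lemma sqrtSechTwoMul_pow (x : ℝ) (n : ℕ) :
    sqrtSechTwoMul x ^ n = cosh (2 * x) ^ (-(n : ℝ) / 2) := by
  rw [sqrtSechTwoMul, ← rpow_natCast, ← rpow_mul (cosh_pos _).le]
  ring_nf

lemma cosh_two_mul_mul_sqrtSechTwoMul_sq (x : ℝ) : cosh (2 * x) * sqrtSechTwoMul x ^ 2 = 1 := by
  rw [sqrtSechTwoMul_pow, show -((2 : ℕ) : ℝ) / 2 = -1 by norm_num, rpow_neg_one,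
    mul_inv_cancel₀ (cosh_pos _).ne']

lemma hasDerivAt_sqrtSechTwoMul (x : ℝ) :
    HasDerivAt sqrtSechTwoMul (-sinh (2 * x) * sqrtSechTwoMul x ^ 3) x := by
  have hc : HasDerivAt (fun y => cosh (2 * y)) (sinh (2 * x) * 2) x :=
    (hasDerivAt_cosh _).comp x ((hasDerivAt_id x).const_mul 2 |>.congr_deriv (mul_one 2))
  convert hc.rpow_const (p := -(1 : ℝ) / 2) (Or.inl (cosh_pos _).ne') using 1
  · rfl
  rw [sqrtSechTwoMul_pow]
  ring_nf

lemma one_add_sq_le_cosh_two_mul (x : ℝ) : 1 + x ^ 2 ≤ cosh (2 * x) := by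
  have h : |x| ≤ |sinh x| := by rw [abs_sinh]; exact self_le_sinh_iff.mpr (abs_nonneg x)
  nlinarith [sq_le_sq.mpr h, cosh_two_mul x, cosh_sq x]

lemma three_rpow_quarter_pow_four : ((3 : ℝ) ^ ((1 : ℝ) / 4)) ^ 4 = 3 := by
  rw [← rpow_natCast, ← rpow_mul (by norm_num)]; norm_num

lemma Q_eq_mul_sqrtSechTwoMul (x : ℝ) : Q x = 3 ^ ((1 : ℝ) / 4) * sqrtSechTwoMul x := by
  rw [Q, div_rpow (by norm_num) (by positivity), div_eq_mul_inv, sqrtSechTwoMul,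
    ← rpow_natCast, ← rpow_mul (cosh_pos _).le, ← rpow_neg (cosh_pos _).le]
  norm_num

lemma hasDerivAt_Q (x : ℝ) :
    HasDerivAt Q (-3 ^ ((1 : ℝ) / 4) * sinh (2 * x) * sqrtSechTwoMul x ^ 3) x := by
  have h := (hasDerivAt_sqrtSechTwoMul x).const_mul (3 ^ ((1 : ℝ) / 4))
  simp only [← Q_eq_mul_sqrtSechTwoMul] at h
  exact h.congr_deriv (by ring)

lemma deriv_Q : deriv Q = fun x => -3 ^ ((1 : ℝ) / 4) * sinh (2 * x) * sqrtSechTwoMul x ^ 3 :=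
  funext fun x => (hasDerivAt_Q x).deriv

lemma Q_pow_four (x : ℝ) : Q x ^ 4 = 3 * sqrtSechTwoMul x ^ 4 := by
  rw [Q_eq_mul_sqrtSechTwoMul, mul_pow, three_rpow_quarter_pow_four]

lemma hasDerivAt_deriv_Q (x : ℝ) : HasDerivAt (deriv Q) (Q x - Q x ^ 5) x := by
  have hs : HasDerivAt (fun y => sinh (2 * y)) (cosh (2 * x) * 2) x :=
    (hasDerivAt_sinh _).comp x ((hasDerivAt_id x).const_mul 2 |>.congr_deriv (mul_one 2))
  have h := (hs.mul ((hasDerivAt_sqrtSechTwoMul x).pow 3)).const_mul (-3 ^ ((1 : ℝ) / 4))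
  simp only [Pi.mul_apply, Pi.pow_apply, ← mul_assoc] at h
  rw [deriv_Q]
  refine h.congr_deriv ?_
  rw [show Q x ^ 5 = Q x * Q x ^ 4 by ring, Q_pow_four, Q_eq_mul_sqrtSechTwoMul]
  linear_combination (-2 * 3 ^ ((1 : ℝ) / 4) * sqrtSechTwoMul x
    + 3 * 3 ^ ((1 : ℝ) / 4) * sqrtSechTwoMul x * (cosh (2 * x) * sqrtSechTwoMul x ^ 2 + 1))
    * cosh_two_mul_mul_sqrtSechTwoMul_sq x
    + 3 * 3 ^ ((1 : ℝ) / 4) * sqrtSechTwoMul x ^ 5 * sinh_sq (2 * x)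

lemma hasDerivAt_Q_sub_Q_pow_five (x : ℝ) :
    HasDerivAt (fun y => Q y - Q y ^ 5) ((1 - 5 * Q x ^ 4) * deriv Q x) x := by
  refine ((hasDerivAt_Q x).sub ((hasDerivAt_Q x).pow 5)).congr_deriv ?_
  rw [(hasDerivAt_Q x).deriv]
  push_cast
  ring

lemma Q_pos (x : ℝ) : 0 < Q x := by
  rw [Q_eq_mul_sqrtSechTwoMul]; exact mul_pos (by positivity) (sqrtSechTwoMul_pos x)

lemma Q_pow_four_le (x : ℝ) : Q x ^ 4 ≤ 3 := by
  rw [Q_pow_four]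
  nlinarith [pow_le_one₀ (sqrtSechTwoMul_pos x).le (sqrtSechTwoMul_le_one x) (n := 4)]

lemma continuous_Q : Continuous Q :=
  Differentiable.continuous fun x => (hasDerivAt_Q x).differentiableAt

lemma abs_deriv_Q_le (x : ℝ) : |deriv Q x| ≤ 3 ^ ((1 : ℝ) / 4) := by
  have hs : |sinh (2 * x)| ≤ cosh (2 * x) := by
    rw [abs_le]; constructor <;> nlinarith [sinh_sq (2 * x), cosh_pos (2 * x)]
  have hr := sqrtSechTwoMul_pos x
  calc |deriv Q x| = 3 ^ ((1 : ℝ) / 4) * (|sinh (2 * x)| * sqrtSechTwoMul x ^ 3) := by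
        rw [deriv_Q, abs_mul, abs_mul, abs_neg, abs_of_pos (by positivity),
          abs_of_pos (pow_pos hr 3), mul_assoc]
    _ ≤ 3 ^ ((1 : ℝ) / 4) * (cosh (2 * x) * sqrtSechTwoMul x ^ 3) := by gcongr
    _ ≤ 3 ^ ((1 : ℝ) / 4) := by
        rw [show cosh (2 * x) * sqrtSechTwoMul x ^ 3
          = cosh (2 * x) * sqrtSechTwoMul x ^ 2 * sqrtSechTwoMul x by ring,
          cosh_two_mul_mul_sqrtSechTwoMul_sq, one_mul]
        exact mul_le_of_le_one_right (by positivity) (sqrtSechTwoMul_le_one x)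

lemma memLp_Q : MemLp Q 2 := by
  have hmeas := continuous_Q.aestronglyMeasurable (μ := volume)
  refine (memLp_two_iff_integrable_sq hmeas).mpr <|
    (integrable_inv_one_add_sq.const_mul (((3 : ℝ) ^ ((1 : ℝ) / 4)) ^ 2)).mono'
      (hmeas.pow 2) (ae_of_all _ fun x => ?_)
  have hr : sqrtSechTwoMul x ^ 2 * (1 + x ^ 2) ≤ 1 := by
    have := mul_le_mul_of_nonneg_left (one_add_sq_le_cosh_two_mul x) (sq_nonneg (sqrtSechTwoMul x))
    linarith [cosh_two_mul_mul_sqrtSechTwoMul_sq x]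
  rw [norm_of_nonneg (sq_nonneg _), Q_eq_mul_sqrtSechTwoMul, mul_pow]
  gcongr
  rwa [← one_div, le_div_iff₀ (by positivity)]

lemma memLp_Q_sub_Q_pow_five : MemLp (fun x => Q x - Q x ^ 5) 2 := by
  refine (memLp_Q.const_mul 2).mono
    ((continuous_Q.sub (continuous_Q.pow 5)).aestronglyMeasurable) (ae_of_all _ fun x => ?_)
  have h0 := Q_pos x
  have h3 := Q_pow_four_le x
  rw [norm_of_nonneg (by positivity : (0 : ℝ) ≤ 2 * Q x), norm_eq_abs, abs_le]
  constructor <;> nlinarith [pow_pos h0 4]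

lemma deriv_Q_zero : deriv Q 0 = 0 := by simp [deriv_Q]

lemma Q_zero_sub_pow_five_ne_zero : Q 0 - Q 0 ^ 5 ≠ 0 := by
  have h4 : Q 0 ^ 4 = 3 := by simp [Q_pow_four, sqrtSechTwoMul]
  have := Q_pos 0
  nlinarith

/-- The kernel of the linearized operator `L f = -f'' + f - 5 Q⁴ f`, among `C²` functions
in `L²(ℝ)`, is spanned by `Q'`. -/
theorem kernel_L_eq_span_Q' (f : ℝ → ℝ) (hf : ContDiff ℝ 2 f)
    (hfL2 : MemLp f 2 volume)
    (heq : ∀ y : ℝ, -(deriv (deriv f) y) + f y - 5 * (Q y) ^ 4 * f y = 0) :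
    ∃ a : ℝ, ∀ y : ℝ, f y = a * deriv Q y := by
  have hf₁ (y : ℝ) : HasDerivAt f (deriv f y) y := (hf.differentiable (by norm_num) y).hasDerivAt
  have hf₂ (y : ℝ) : HasDerivAt (deriv f) ((1 - 5 * Q y ^ 4) * f y) y :=
    ((contDiff_succ_iff_deriv.mp (hf : ContDiff ℝ (1 + 1) f)).2.2.differentiable one_ne_zero
      y).hasDerivAt.congr_deriv (by linarith [heq y])
  have hf0 : f 0 = 0 := by
    have hW := wronskian_eq_zero_of_memLp hf₁ hf₂ hasDerivAt_deriv_Q hasDerivAt_Q_sub_Q_pow_five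
      hfL2 abs_deriv_Q_le memLp_Q_sub_Q_pow_five 0
    rw [wronskian, deriv_Q_zero, mul_zero, sub_zero] at hW
    exact (mul_eq_zero.mp hW).resolve_right Q_zero_sub_pow_five_ne_zero
  set a := deriv f 0 / (Q 0 - Q 0 ^ 5)
  refine ⟨a, congrFun <| ODE_secondOrderLinear_unique (M := 14) (t₀ := 0) (fun y => ?_) hf₁ hf₂
    (fun y => (hasDerivAt_deriv_Q y).const_mul a)
    (fun y => ((hasDerivAt_Q_sub_Q_pow_five y).const_mul a).congr_deriv (by ring)) ?_ ?_⟩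
  · exact abs_le.mpr ⟨by nlinarith [Q_pow_four_le y], by nlinarith [pow_pos (Q_pos y) 4]⟩
  · rw [hf0, deriv_Q_zero, mul_zero]
  · exact (div_mul_cancel₀ _ Q_zero_sub_pow_five_ne_zero).symm
end

section
/- Let K ≥ 1, let P₁, …, P_K satisfy P_k ∈ 𝒵_{k−1} for each k, let γ ∈ (17/20, 1], and let Q_b be the localized profile built from these data. Then for every j ≥ 0 there exists C_j > 0 such that for all b with 0 < |b| ≤ 1 and all y ∈ ℝ: (1) |∂_y^j Q_b(y)| ≤ C_j·( e^{−|y|/2} + |b|^{1+j}·𝟙_{[−1,0]}(|b|^γ y) + |b|^{1+jγ}·𝟙_{[−2,−1]}(|b|^γ y) ); (2) |∂_y^j (Q_b − Q)(y)| ≤ C_j·( |b|·e^{−|y|/2} + |b|^{1+j}·𝟙_{[−1,0]}(|b|^γ y) + |b|^{1+jγ}·𝟙_{[−2,−1]}(|b|^γ y) ) ≤ C_j·|b|; (3) |∂_y^j (∂Q_b/∂b)(y)| ≤ C_j·( e^{−|y|/2} + |b|^{j}·𝟙_{[−1,0]}(|b|^γ y) + |b|^{jγ}·𝟙_{[−2,−1]}(|b|^γ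 y) ), where ∂Q_b/∂b denotes the partial derivative of (b,y) ↦ Q_b(y) with respect to b (for b ≠ 0). -/
open MeasureTheory
open scoped BigOperators

/-- The space `𝒵_ℓ`. -/
def memZ (ℓ : ℤ) (f : ℝ → ℝ) : Prop :=
  ContDiff ℝ (⊤ : ℕ∞) f ∧
  (∀ j : ℕ, ∃ C r : ℝ, 0 ≤ C ∧ 0 ≤ r ∧ ∀ y : ℝ, 0 < y →
      |iteratedDeriv j f y| ≤ C * (1 + |y|) ^ r * Real.exp (-|y|)) ∧
  (∀ j : ℕ, ℓ < (j : ℤ) → ∃ C r : ℝ, 0 ≤ C ∧ 0 ≤ r ∧ ∀ y : ℝ, y < 0 →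
      |iteratedDeriv j f y| ≤ C * (1 + |y|) ^ r * Real.exp (-|y|)) ∧
  (∀ j : ℕ, (j : ℤ) ≤ ℓ → ∃ D : ℝ, 0 ≤ D ∧ ∀ y : ℝ, y < 0 →
      |iteratedDeriv j f y| ≤ D * (1 + |y|) ^ (ℓ - (j : ℤ)))

/-- Characteristic function of the interval `[a, c]`. -/
noncomputable def ind (a c x : ℝ) : ℝ := Set.indicator (Set.Icc a c) (fun _ => (1 : ℝ)) x

/-- `R_b = Σ_{k=1}^K b^k P_k`. -/
noncomputable def RB (K : ℕ) (P : ℕ → ℝ → ℝ) (b : ℝ) : ℝ → ℝ := fun y =>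
  ∑ k ∈ Finset.Icc 1 K, b ^ k * P k y

/-- The localized profile `Q_b(y) = Q(y) + R_b(y) χ(|b|^γ y)`. -/
noncomputable def QB (K : ℕ) (P : ℕ → ℝ → ℝ) (χ : ℝ → ℝ) (γ b : ℝ) : ℝ → ℝ := fun y =>
  Q y + RB K P b y * χ (|b| ^ γ * y)


open Filter Topology




/-- continuous comparison up to boundary -/
lemma aux_cont_le_Ioi {f g : ℝ → ℝ} {a : ℝ} (hf : Continuous f) (hg : Continuous g)
    (h : ∀ y, a < y → f y ≤ g y) : f a ≤ g a := by
  have h1 : Filter.Tendsto f (𝓝[>] a) (𝓝 (f a)) := (hf.tendsto a).mono_left nhdsWithin_le_nhds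
  have h2 : Filter.Tendsto g (𝓝[>] a) (𝓝 (g a)) := (hg.tendsto a).mono_left nhdsWithin_le_nhds
  refine le_of_tendsto_of_tendsto h1 h2 ?_
  filter_upwards [self_mem_nhdsWithin] with x hx using h x hx

lemma aux_cont_le_Iio {f g : ℝ → ℝ} {a : ℝ} (hf : Continuous f) (hg : Continuous g)
    (h : ∀ y, y < a → f y ≤ g y) : f a ≤ g a := by
  have h1 : Filter.Tendsto f (𝓝[<] a) (𝓝 (f a)) := (hf.tendsto a).mono_left nhdsWithin_le_nhds
  have h2 : Filter.Tendsto g (𝓝[<] a) (𝓝 (g a)) := (hg.tendsto a).mono_left nhdsWithin_le_nhds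
  refine le_of_tendsto_of_tendsto h1 h2 ?_
  filter_upwards [self_mem_nhdsWithin] with x hx using h x hx

/-- polynomial-times-exponential bound -/
lemma aux_poly_exp (r θ : ℝ) (hr : 0 ≤ r) (hθ : 0 < θ) :
    ∃ M : ℝ, 0 ≤ M ∧ ∀ s : ℝ, 0 ≤ s → (1 + s) ^ r * Real.exp (-(θ * s)) ≤ M := by
  obtain ⟨A, hA⟩ : ∃ A : ℝ, A = (r + 1) / θ + 1 := ⟨_, rfl⟩
  have hA1 : 1 ≤ A := by
    have : 0 ≤ (r + 1) / θ := div_nonneg (by linarith) hθ.le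
    rw [hA]; linarith
  have hA0 : 0 ≤ A := by linarith
  refine ⟨A ^ r, Real.rpow_nonneg hA0 r, fun s hs => ?_⟩
  have key : 1 + s ≤ A * Real.exp (θ * s / (r + 1)) := by
    have h1 : 1 + θ * s / (r + 1) ≤ Real.exp (θ * s / (r + 1)) := by
      have := Real.add_one_le_exp (θ * s / (r + 1)); linarith
    have h2 : A * (1 + θ * s / (r + 1)) ≤ A * Real.exp (θ * s / (r + 1)) :=
      mul_le_mul_of_nonneg_left h1 hA0
    refine le_trans ?_ h2
    have h3 : A * (θ / (r + 1)) ≥ 1 := by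
      rw [hA, ge_iff_le, ← div_le_iff₀ (by positivity)]
      rw [div_div_eq_mul_div, one_mul]
      have : (r + 1) / θ ≤ (r + 1) / θ + 1 := by linarith
      exact this
    have h4 : A * (θ * s / (r + 1)) = (A * (θ / (r+1))) * s := by ring
    have h5 : s ≤ A * (θ * s / (r + 1)) := by
      rw [h4]
      nlinarith [mul_le_mul_of_nonneg_right h3 hs]
    have h7 : 1 + s ≤ A * (1 + θ * s / (r + 1)) := by nlinarith
    linarith
  have key2 : (1 + s) ^ r ≤ A ^ r * Real.exp (θ * s * r / (r + 1)) := by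
    calc (1 + s) ^ r ≤ (A * Real.exp (θ * s / (r + 1))) ^ r :=
          Real.rpow_le_rpow (by linarith) key hr
    _ = A ^ r * (Real.exp (θ * s / (r + 1))) ^ r :=
          Real.mul_rpow hA0 (Real.exp_nonneg _)
    _ = A ^ r * Real.exp (θ * s / (r + 1) * r) := by rw [← Real.exp_mul]
    _ = A ^ r * Real.exp (θ * s * r / (r + 1)) := by ring_nf
  have key3 : Real.exp (θ * s * r / (r + 1)) * Real.exp (-(θ * s)) ≤ 1 := by
    rw [← Real.exp_add]
    apply Real.exp_le_one_iff.mpr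
    have : θ * s * r / (r + 1) ≤ θ * s := by
      rw [div_le_iff₀ (by positivity)]
      nlinarith [mul_nonneg hθ.le hs]
    linarith
  calc (1 + s) ^ r * Real.exp (-(θ * s))
      ≤ (A ^ r * Real.exp (θ * s * r / (r + 1))) * Real.exp (-(θ * s)) := by
        apply mul_le_mul_of_nonneg_right key2 (Real.exp_nonneg _)
    _ = A ^ r * (Real.exp (θ * s * r / (r + 1)) * Real.exp (-(θ * s))) := by ring
    _ ≤ A ^ r * 1 := by
        apply mul_le_mul_of_nonneg_left key3 (Real.rpow_nonneg hA0 r)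
    _ = A ^ r := mul_one _

/-- Leibniz-type bound for iterated derivatives of products on ℝ. -/
lemma aux_leibniz {f g : ℝ → ℝ} {n : ℕ} (hf : ContDiff ℝ n f) (hg : ContDiff ℝ n g) (x : ℝ) :
    |iteratedDeriv n (fun y => f y * g y) x| ≤
      ∑ i ∈ Finset.range (n + 1), (n.choose i : ℝ) * |iteratedDeriv i f x|
        * |iteratedDeriv (n - i) g x| := by
  have h := norm_iteratedFDeriv_mul_le (𝕜 := ℝ) hf hg x (le_refl (n : WithTop ℕ∞))
  calc |iteratedDeriv n (fun y => f y * g y) x|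
      = ‖iteratedFDeriv ℝ n (fun y => f y * g y) x‖ := by
        rw [norm_iteratedFDeriv_eq_norm_iteratedDeriv, Real.norm_eq_abs]
    _ ≤ _ := by
        refine h.trans (le_of_eq ?_)
        refine Finset.sum_congr rfl (fun i _ => ?_)
        rw [norm_iteratedFDeriv_eq_norm_iteratedDeriv, norm_iteratedFDeriv_eq_norm_iteratedDeriv,
          Real.norm_eq_abs, Real.norm_eq_abs]

lemma aux_itadd {f g : ℝ → ℝ} {n : ℕ} (hf : ContDiff ℝ n f) (hg : ContDiff ℝ n g) (x : ℝ) :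
    iteratedDeriv n (fun y => f y + g y) x = iteratedDeriv n f x + iteratedDeriv n g x := by
  rw [← iteratedDerivWithin_univ, ← iteratedDerivWithin_univ, ← iteratedDerivWithin_univ]
  exact iteratedDerivWithin_add (Set.mem_univ x) uniqueDiffOn_univ
    hf.contDiffWithinAt hg.contDiffWithinAt

lemma aux_itconstmul (c : ℝ) {f : ℝ → ℝ} {n : ℕ} (hf : ContDiff ℝ n f) (x : ℝ) :
    iteratedDeriv n (fun y => c * f y) x = c * iteratedDeriv n f x := by
  rw [← iteratedDerivWithin_univ, ← iteratedDerivWithin_univ]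
  exact iteratedDerivWithin_const_mul (Set.mem_univ x) uniqueDiffOn_univ c hf.contDiffWithinAt

lemma aux_itzero (n : ℕ) (x : ℝ) : iteratedDeriv n (fun _ : ℝ => (0:ℝ)) x = 0 := by
  induction n generalizing x with
  | zero => simp
  | succ m ih =>
    rw [iteratedDeriv_succ']
    simp only [deriv_const']
    exact ih x

lemma aux_itsum {n : ℕ} (s : Finset ℕ) (F : ℕ → ℝ → ℝ)
    (hF : ∀ k ∈ s, ContDiff ℝ n (F k)) (x : ℝ) :
    iteratedDeriv n (fun y => ∑ k ∈ s, F k y) x = ∑ k ∈ s, iteratedDeriv n (F k) x := by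
  induction s using Finset.cons_induction with
  | empty => simpa using aux_itzero n x
  | cons a s ha ih =>
    rw [Finset.sum_cons]
    have h1 : ContDiff ℝ n (F a) := hF a (Finset.mem_cons_self a s)
    have h2 : ∀ k ∈ s, ContDiff ℝ n (F k) := fun k hk => hF k (Finset.mem_cons_of_mem hk)
    have h3 : ContDiff ℝ n (fun y => ∑ k ∈ s, F k y) := ContDiff.sum h2
    rw [show (fun y => ∑ k ∈ Finset.cons a s ha, F k y)
        = fun y => F a y + ∑ k ∈ s, F k y by funext y; rw [Finset.sum_cons]]
    rw [aux_itadd h1 h3 x, ih h2]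


lemma aux_itconst (n : ℕ) (hn : n ≠ 0) (c : ℝ) (x : ℝ) :
    iteratedDeriv n (fun _ : ℝ => c) x = 0 := by
  obtain ⟨m, rfl⟩ := Nat.exists_eq_succ_of_ne_zero hn
  rw [iteratedDeriv_succ']
  simp only [deriv_const']
  exact aux_itzero m x






noncomputable def auxT (x : ℝ) : ℝ := Real.sinh (2 * x) / Real.cosh (2 * x)

lemma Q_eq (x : ℝ) : Q x = (3 : ℝ) ^ ((1:ℝ)/4) * Real.cosh (2*x) ^ (-(1/2) : ℝ) := by
  have hc : 0 < Real.cosh (2*x) := Real.cosh_pos _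
  rw [Q, Real.div_rpow (by norm_num) (by positivity)]
  rw [← Real.rpow_natCast (Real.cosh (2*x)) 2, ← Real.rpow_mul hc.le]
  norm_num
  rw [Real.rpow_neg hc.le]
  ring

lemma Q_nonneg (x : ℝ) : 0 ≤ Q x := Real.rpow_nonneg (by positivity) _

lemma auxT_abs_le (x : ℝ) : |auxT x| ≤ 1 := by
  have hc : 0 < Real.cosh (2*x) := Real.cosh_pos _
  rw [auxT, abs_div, abs_of_pos hc, div_le_one hc]
  rw [abs_le]
  constructor
  · nlinarith [Real.cosh_sq (2*x)]
  · nlinarith [Real.cosh_sq (2*x)]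

lemma aux_hasDerivAt_cosh2 (x : ℝ) :
    HasDerivAt (fun x : ℝ => Real.cosh (2*x)) (Real.sinh (2*x) * 2) x := by
  have h2x : HasDerivAt (fun x : ℝ => 2*x) 2 x := by
    simpa using (hasDerivAt_id x).const_mul (2:ℝ)
  exact (Real.hasDerivAt_cosh (2*x)).comp x h2x

lemma aux_hasDerivAt_sinh2 (x : ℝ) :
    HasDerivAt (fun x : ℝ => Real.sinh (2*x)) (Real.cosh (2*x) * 2) x := by
  have h2x : HasDerivAt (fun x : ℝ => 2*x) 2 x := by
    simpa using (hasDerivAt_id x).const_mul (2:ℝ)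
  exact (Real.hasDerivAt_sinh (2*x)).comp x h2x

lemma auxT_hasDeriv (x : ℝ) : HasDerivAt auxT (2 * (1 - auxT x ^ 2)) x := by
  have hc : 0 < Real.cosh (2*x) := Real.cosh_pos _
  have h := (aux_hasDerivAt_sinh2 x).div (aux_hasDerivAt_cosh2 x) hc.ne'
  have heq : (Real.cosh (2*x) * 2 * Real.cosh (2*x) - Real.sinh (2*x) * (Real.sinh (2*x) * 2))
      / Real.cosh (2*x) ^ 2 = 2 * (1 - auxT x ^ 2) := by
    rw [auxT]
    field_simp
  rw [heq] at h
  exact h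

lemma auxQ_hasDeriv (x : ℝ) : HasDerivAt Q (-(auxT x * Q x)) x := by
  have hc : 0 < Real.cosh (2*x) := Real.cosh_pos _
  have h1 := (aux_hasDerivAt_cosh2 x).rpow_const (p := (-(1/2) : ℝ)) (Or.inl hc.ne')
  have h2 := h1.const_mul ((3:ℝ) ^ ((1:ℝ)/4))
  have heqf : (fun x => (3:ℝ) ^ ((1:ℝ)/4) * Real.cosh (2*x) ^ (-(1/2) : ℝ)) = Q :=
    funext fun x => (Q_eq x).symm
  rw [heqf] at h2
  have hsplit : Real.cosh (2*x) ^ ((-(1/2) : ℝ) - 1) =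
      Real.cosh (2*x) ^ (-(1/2) : ℝ) * (Real.cosh (2*x))⁻¹ := by
    rw [show ((-(1/2) : ℝ) - 1) = (-(1/2) : ℝ) + (-1) by ring, Real.rpow_add hc,
      Real.rpow_neg_one]
  refine h2.congr_deriv ?_
  rw [hsplit, auxT, Q_eq]
  field_simp

lemma auxQ_contDiff (n : ℕ) : ContDiff ℝ n Q := by
  have h1 : ContDiff ℝ n (fun x : ℝ => 3 / Real.cosh (2*x) ^ 2) := by
    apply ContDiff.div contDiff_const
    · exact ((Real.contDiff_cosh.comp (contDiff_const.mul contDiff_id)).pow 2)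
    · intro x; positivity
  have h2 : ContDiff ℝ n (fun x : ℝ => (1:ℝ)/4) := contDiff_const
  exact h1.rpow h2 (fun x => by positivity)

lemma auxQ_poly (n : ℕ) : ∃ p : Polynomial ℝ, ∀ x, iteratedDeriv n Q x = p.eval (auxT x) * Q x := by
  induction n with
  | zero => exact ⟨1, fun x => by simp⟩
  | succ n ih =>
    obtain ⟨p, hp⟩ := ih
    refine ⟨Polynomial.C 2 * (1 - Polynomial.X^2) * p.derivative - Polynomial.X * p, fun x => ?_⟩
    rw [iteratedDeriv_succ, funext hp]
    have hd : HasDerivAt (fun x => p.eval (auxT x) * Q x)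
        ((p.derivative.eval (auxT x) * (2 * (1 - auxT x ^ 2))) * Q x
          + p.eval (auxT x) * (-(auxT x * Q x))) x := by
      exact (((p.hasDerivAt (auxT x)).comp x (auxT_hasDeriv x))).mul (auxQ_hasDeriv x)
    rw [hd.deriv]
    simp only [Polynomial.eval_mul, Polynomial.eval_sub, Polynomial.eval_one, Polynomial.eval_pow,
      Polynomial.eval_C, Polynomial.eval_X]
    ring

lemma aux_polyeval (p : Polynomial ℝ) (t : ℝ) (ht : |t| ≤ 1) :
    |p.eval t| ≤ ∑ i ∈ Finset.range (p.natDegree + 1), |p.coeff i| := by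
  rw [Polynomial.eval_eq_sum_range]
  refine (Finset.abs_sum_le_sum_abs _ _).trans ?_
  refine Finset.sum_le_sum (fun i _ => ?_)
  rw [abs_mul, abs_pow]
  exact mul_le_of_le_one_right (abs_nonneg _) (pow_le_one₀ (abs_nonneg t) ht)

lemma auxQ_decay : ∃ C : ℝ, 0 ≤ C ∧ ∀ x, Q x ≤ C * Real.exp (-|x|) := by
  refine ⟨(3:ℝ) ^ ((1:ℝ)/4) * (2:ℝ) ^ ((1:ℝ)/2), by positivity, fun x => ?_⟩
  have hc : 0 < Real.cosh (2*x) := Real.cosh_pos _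
  have hkey : Real.exp (2*|x|) / 2 ≤ Real.cosh (2*x) := by
    rw [← Real.cosh_abs, show |2*x| = 2*|x| by rw [abs_mul]; norm_num, Real.cosh_eq]
    have := Real.exp_nonneg (-(2*|x|))
    linarith
  have h1 : Real.cosh (2*x) ^ (-(1/2) : ℝ) ≤ (Real.exp (2*|x|) / 2) ^ (-(1/2) : ℝ) :=
    Real.rpow_le_rpow_of_nonpos (by positivity) hkey (by norm_num)
  have h2 : (Real.exp (2*|x|) / 2) ^ (-(1/2) : ℝ) = (2:ℝ) ^ ((1:ℝ)/2) * Real.exp (-|x|) := by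
    rw [Real.div_rpow (Real.exp_nonneg _) (by norm_num)]
    rw [← Real.exp_mul]
    rw [show (2*|x|) * (-(1/2) : ℝ) = -|x| by ring]
    rw [div_eq_mul_inv, ← Real.rpow_neg (by norm_num : (0:ℝ) ≤ 2)]
    ring_nf
  rw [Q_eq]
  calc (3:ℝ) ^ ((1:ℝ)/4) * Real.cosh (2*x) ^ (-(1/2) : ℝ)
      ≤ (3:ℝ) ^ ((1:ℝ)/4) * ((Real.exp (2*|x|) / 2) ^ (-(1/2) : ℝ)) :=
        mul_le_mul_of_nonneg_left h1 (by positivity)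
    _ = (3:ℝ) ^ ((1:ℝ)/4) * (2:ℝ) ^ ((1:ℝ)/2) * Real.exp (-|x|) := by rw [h2]; ring

lemma auxQ_bound (n : ℕ) : ∃ C : ℝ, 0 ≤ C ∧ ∀ x, |iteratedDeriv n Q x| ≤ C * Real.exp (-|x|/2) := by
  obtain ⟨p, hp⟩ := auxQ_poly n
  obtain ⟨CQ, hCQ, hQd⟩ := auxQ_decay
  refine ⟨(∑ i ∈ Finset.range (p.natDegree + 1), |p.coeff i|) * CQ, by positivity, fun x => ?_⟩
  rw [hp x, abs_mul, abs_of_nonneg (Q_nonneg x)]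
  have h1 := aux_polyeval p (auxT x) (auxT_abs_le x)
  have h2 : Q x ≤ CQ * Real.exp (-|x|/2) := by
    refine (hQd x).trans (mul_le_mul_of_nonneg_left ?_ hCQ)
    apply Real.exp_le_exp.mpr
    have := abs_nonneg x
    linarith
  calc |p.eval (auxT x)| * Q x
      ≤ (∑ i ∈ Finset.range (p.natDegree + 1), |p.coeff i|) * (CQ * Real.exp (-|x|/2)) := by
        apply mul_le_mul h1 h2 (Q_nonneg x) (Finset.sum_nonneg (fun i _ => abs_nonneg _))
    _ = (∑ i ∈ Finset.range (p.natDegree + 1), |p.coeff i|) * CQ * Real.exp (-|x|/2) := by ring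



-- paste of p1 essentials assumed; compile standalone with minimal deps
lemma aux_cont_zero_Ioi' {f : ℝ → ℝ} {a : ℝ} (hf : Continuous f)
    (h : ∀ y, a < y → f y = 0) : f a = 0 := by
  have h1 : Tendsto f (𝓝[>] a) (𝓝 (f a)) := (hf.tendsto a).mono_left nhdsWithin_le_nhds
  have h2 : Tendsto f (𝓝[>] a) (𝓝 0) := by
    refine Tendsto.congr' ?_ tendsto_const_nhds
    filter_upwards [self_mem_nhdsWithin] with x hx using (h x hx).symm
  exact tendsto_nhds_unique h1 h2

lemma aux_cont_zero_Iio' {f : ℝ → ℝ} {a : ℝ} (hf : Continuous f)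
    (h : ∀ y, y < a → f y = 0) : f a = 0 := by
  have h1 : Tendsto f (𝓝[<] a) (𝓝 (f a)) := (hf.tendsto a).mono_left nhdsWithin_le_nhds
  have h2 : Tendsto f (𝓝[<] a) (𝓝 0) := by
    refine Tendsto.congr' ?_ tendsto_const_nhds
    filter_upwards [self_mem_nhdsWithin] with x hx using (h x hx).symm
  exact tendsto_nhds_unique h1 h2

lemma aux_itzero' (n : ℕ) (x : ℝ) : iteratedDeriv n (fun _ : ℝ => (0:ℝ)) x = 0 := by
  induction n generalizing x with
  | zero => simp
  | succ m ih => rw [iteratedDeriv_succ']; simp only [deriv_const']; exact ih x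

lemma aux_itconst' (n : ℕ) (hn : n ≠ 0) (c : ℝ) (x : ℝ) :
    iteratedDeriv n (fun _ : ℝ => c) x = 0 := by
  obtain ⟨m, rfl⟩ := Nat.exists_eq_succ_of_ne_zero hn
  rw [iteratedDeriv_succ']; simp only [deriv_const']; exact aux_itzero' m x

section chi
variable {χ : ℝ → ℝ} (hχsmooth : ContDiff ℝ (⊤ : ℕ∞) χ)

include hχsmooth

lemma auxχ_right (hχone : ∀ y : ℝ, -1 ≤ y → χ y = 1) (m : ℕ) (hm : m ≠ 0) :
    ∀ t : ℝ, -1 ≤ t → iteratedDeriv m χ t = 0 := by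
  have hz : ∀ t : ℝ, -1 < t → iteratedDeriv m χ t = 0 := by
    intro t ht
    have hev : χ =ᶠ[𝓝 t] fun _ => (1:ℝ) := by
      filter_upwards [Ioi_mem_nhds ht] with s hs using hχone s (le_of_lt hs)
    rw [hev.iteratedDeriv_eq m]
    exact aux_itconst' m hm 1 t
  intro t ht
  rcases eq_or_lt_of_le ht with h | h
  · rw [← h]
    exact aux_cont_zero_Ioi' (hχsmooth.continuous_iteratedDeriv m (by exact_mod_cast le_top)) (fun y hy => hz y hy)
  · exact hz t h

lemma auxχ_left (hχzero : ∀ y : ℝ, y ≤ -2 → χ y = 0) (m : ℕ) :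
    ∀ t : ℝ, t ≤ -2 → iteratedDeriv m χ t = 0 := by
  have hz : ∀ t : ℝ, t < -2 → iteratedDeriv m χ t = 0 := by
    intro t ht
    have hev : χ =ᶠ[𝓝 t] fun _ => (0:ℝ) := by
      filter_upwards [Iio_mem_nhds ht] with s hs using hχzero s (le_of_lt hs)
    rw [hev.iteratedDeriv_eq m]
    exact aux_itzero' m t
  intro t ht
  rcases eq_or_lt_of_le ht with h | h
  · rw [h]
    exact aux_cont_zero_Iio' (hχsmooth.continuous_iteratedDeriv m (by exact_mod_cast le_top)) (fun y hy => hz y hy)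
  · exact hz t h

lemma auxχ_sup (hχ0 : ∀ y : ℝ, 0 ≤ χ y) (hχ1 : ∀ y : ℝ, χ y ≤ 1)
    (hχone : ∀ y : ℝ, -1 ≤ y → χ y = 1) (hχzero : ∀ y : ℝ, y ≤ -2 → χ y = 0) (m : ℕ) :
    ∃ M : ℝ, 0 ≤ M ∧ ∀ t, |iteratedDeriv m χ t| ≤ M := by
  rcases Nat.eq_zero_or_pos m with rfl | hm
  · exact ⟨1, zero_le_one, fun t => by
      rw [iteratedDeriv_zero, abs_le]; exact ⟨by linarith [hχ0 t], hχ1 t⟩⟩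
  obtain ⟨C, hC⟩ := (isCompact_Icc (a := (-2:ℝ)) (b := -1)).exists_bound_of_continuousOn
    ((hχsmooth.continuous_iteratedDeriv m (by exact_mod_cast le_top)).continuousOn)
  refine ⟨max C 0, le_max_right _ _, fun t => ?_⟩
  rcases le_or_gt t (-2) with h | h
  · rw [auxχ_left hχsmooth hχzero m t h]; simpa using le_max_right C 0
  rcases le_or_gt (-1) t with h2 | h2
  · rw [auxχ_right hχsmooth hχone m hm.ne' t h2]; simpa using le_max_right C 0
  · exact le_trans (by simpa [Real.norm_eq_abs] using hC t ⟨h.le, h2.le⟩) (le_max_left C 0)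

end chi

section P
variable {K : ℕ} {P : ℕ → ℝ → ℝ}
variable (hP : ∀ k : ℕ, 1 ≤ k → k ≤ K → memZ ((k : ℤ) - 1) (P k))
include hP

lemma auxP_cont {k : ℕ} (hk1 : 1 ≤ k) (hkK : k ≤ K) (i : ℕ) :
    Continuous (iteratedDeriv i (P k)) :=
  (hP k hk1 hkK).1.continuous_iteratedDeriv i (by exact_mod_cast le_top)

/-- positive-side bound, extended to `0 ≤ y`. -/
lemma auxP_pos {k : ℕ} (hk1 : 1 ≤ k) (hkK : k ≤ K) (i : ℕ) :
    ∃ C r : ℝ, 0 ≤ C ∧ 0 ≤ r ∧ ∀ y : ℝ, 0 ≤ y →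
      |iteratedDeriv i (P k) y| ≤ C * (1 + |y|) ^ r * Real.exp (-|y|) := by
  obtain ⟨C, r, hC, hr, h⟩ := (hP k hk1 hkK).2.1 i
  refine ⟨C, r, hC, hr, fun y hy => ?_⟩
  have hg : Continuous fun y : ℝ => C * (1 + |y|) ^ r * Real.exp (-|y|) := by
    refine Continuous.mul (Continuous.mul continuous_const ?_) ?_
    · exact (continuous_const.add continuous_abs).rpow_const (fun x => Or.inr hr)
    · exact Real.continuous_exp.comp continuous_abs.neg
  rcases eq_or_lt_of_le hy with h0 | h0
  · cases h0
    exact aux_cont_le_Ioi ((auxP_cont hP hk1 hkK i).abs) hg (fun z hz => h z hz)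
  · exact h y h0

/-- negative-side exponential bound for `k ≤ i`, extended to `y ≤ 0`. -/
lemma auxP_negexp {k : ℕ} (hk1 : 1 ≤ k) (hkK : k ≤ K) {i : ℕ} (hik : k ≤ i) :
    ∃ C r : ℝ, 0 ≤ C ∧ 0 ≤ r ∧ ∀ y : ℝ, y ≤ 0 →
      |iteratedDeriv i (P k) y| ≤ C * (1 + |y|) ^ r * Real.exp (-|y|) := by
  obtain ⟨C, r, hC, hr, h⟩ := (hP k hk1 hkK).2.2.1 i (by omega)
  refine ⟨C, r, hC, hr, fun y hy => ?_⟩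
  have hg : Continuous fun y : ℝ => C * (1 + |y|) ^ r * Real.exp (-|y|) := by
    refine Continuous.mul (Continuous.mul continuous_const ?_) ?_
    · exact (continuous_const.add continuous_abs).rpow_const (fun x => Or.inr hr)
    · exact Real.continuous_exp.comp continuous_abs.neg
  rcases eq_or_lt_of_le hy with h0 | h0
  · cases h0
    exact aux_cont_le_Iio ((auxP_cont hP hk1 hkK i).abs) hg (fun z hz => h z hz)
  · exact h y h0

/-- negative-side polynomial bound for `i < k`, extended to `y ≤ 0`, in `rpow` form. -/
lemma auxP_negpoly {k : ℕ} (hk1 : 1 ≤ k) (hkK : k ≤ K) {i : ℕ} (hik : i < k) :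
    ∃ D : ℝ, 0 ≤ D ∧ ∀ y : ℝ, y ≤ 0 →
      |iteratedDeriv i (P k) y| ≤ D * (1 + |y|) ^ (((k - 1 - i : ℕ) : ℝ)) := by
  obtain ⟨D, hD, h⟩ := (hP k hk1 hkK).2.2.2 i (by omega)
  have hcast : ((k : ℤ) - 1 - (i : ℤ)) = ((k - 1 - i : ℕ) : ℤ) := by omega
  have key : ∀ y : ℝ, (1 + |y|) ^ ((k:ℤ) - 1 - (i:ℤ)) = (1 + |y|) ^ (((k - 1 - i : ℕ) : ℝ)) := by
    intro y
    have hb : (0:ℝ) < 1 + |y| := by positivity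
    rw [hcast, ← Real.rpow_intCast (1 + |y|) ((k - 1 - i : ℕ) : ℤ)]
    norm_num
  refine ⟨D, hD, fun y hy => ?_⟩
  have hg : Continuous fun y : ℝ => D * (1 + |y|) ^ (((k - 1 - i : ℕ) : ℝ)) := by
    refine Continuous.mul continuous_const ?_
    exact (continuous_const.add continuous_abs).rpow_const (fun x => Or.inr (by positivity))
  rcases eq_or_lt_of_le hy with h0 | h0
  · cases h0
    exact aux_cont_le_Iio ((auxP_cont hP hk1 hkK i).abs) hg
      (fun z hz => (key z) ▸ (h z hz))
  · exact (key y) ▸ (h y h0)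

end P


section PB
variable {K : ℕ} {P : ℕ → ℝ → ℝ}
variable (hP : ∀ k : ℕ, 1 ≤ k → k ≤ K → memZ ((k : ℤ) - 1) (P k))
include hP

/-- Region-B bound on `iteratedDeriv i (P k)`. -/
lemma auxP_B {k : ℕ} (hk1 : 1 ≤ k) (hkK : k ≤ K) (i : ℕ) :
    ∃ E : ℝ, 0 ≤ E ∧ ∀ c y : ℝ, 0 < c → c ≤ 1 → y ≤ 0 → 1/c ≤ |y| → |y| ≤ 2/c →
      |iteratedDeriv i (P k) y| ≤ E * c ^ ((i:ℝ) + 1 - k) := by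
  have hcast : i < k → ((k - 1 - i : ℕ) : ℝ) = (k:ℝ) - 1 - (i:ℝ) := by
    intro hik
    have h1 : 1 + i ≤ k := by omega
    have h2 : (k - 1 - i : ℕ) = k - (1 + i) := by omega
    rw [h2, Nat.cast_sub h1]
    push_cast; ring
  rcases lt_or_ge i k with hik | hik
  · -- polynomial bound
    obtain ⟨D, hD, h⟩ := auxP_negpoly hP hk1 hkK hik
    refine ⟨D * 3 ^ (((k - 1 - i : ℕ)) : ℝ), by positivity, fun c y hc hc1 hy h1c h2c => ?_⟩
    have hb1 : (1:ℝ) + |y| ≤ 3 / c := by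
      have h3 : (1:ℝ) ≤ 1/c := by rw [le_div_iff₀ hc]; linarith
      have : (3:ℝ)/c = 1/c + 2/c := by ring
      linarith
    have hstep : (1 + |y|) ^ (((k - 1 - i : ℕ)) : ℝ) ≤ (3/c) ^ (((k - 1 - i : ℕ)) : ℝ) :=
      Real.rpow_le_rpow (by positivity) hb1 (by positivity)
    have hsplit : (3/c) ^ (((k - 1 - i : ℕ)) : ℝ)
        = 3 ^ (((k - 1 - i : ℕ)) : ℝ) * c ^ ((i:ℝ) + 1 - k) := by
      rw [Real.div_rpow (by norm_num) hc.le, div_eq_mul_inv, ← Real.rpow_neg hc.le]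
      congr 1
      rw [hcast hik]
      ring
    calc |iteratedDeriv i (P k) y| ≤ D * (1 + |y|) ^ (((k - 1 - i : ℕ)) : ℝ) := h y hy
      _ ≤ D * (3 ^ (((k - 1 - i : ℕ)) : ℝ) * c ^ ((i:ℝ) + 1 - k)) := by
          rw [← hsplit]; exact mul_le_mul_of_nonneg_left hstep hD
      _ = D * 3 ^ (((k - 1 - i : ℕ)) : ℝ) * c ^ ((i:ℝ) + 1 - k) := by ring
  · -- exponential bound
    obtain ⟨C, r, hC, hr, h⟩ := auxP_negexp hP hk1 hkK hik
    obtain ⟨M1, hM1, hM1h⟩ := aux_poly_exp r (1/2) hr one_half_pos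
    obtain ⟨M2, hM2, hM2h⟩ := aux_poly_exp ((i:ℝ)+1) (1/2) (by positivity) one_half_pos
    refine ⟨C * M1 * M2, by positivity, fun c y hc hc1 hy h1c h2c => ?_⟩
    have key1 : (1+|y|) ^ r * Real.exp (-|y|) ≤ M1 * Real.exp (-(|y|/2)) := by
      have e1 : Real.exp (-|y|) = Real.exp (-(1/2 * |y|)) * Real.exp (-(|y|/2)) := by
        rw [← Real.exp_add]; ring_nf
      rw [e1, ← mul_assoc]
      exact mul_le_mul_of_nonneg_right (hM1h |y| (abs_nonneg y)) (Real.exp_nonneg _)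
    have key2 : Real.exp (-(|y|/2)) ≤ M2 * c ^ ((i:ℝ)+1) := by
      have e1 : Real.exp (-(|y|/2)) ≤ Real.exp (-(1/2 * (1/c))) := by
        apply Real.exp_le_exp.mpr
        have : 1/c ≤ |y| := h1c
        linarith
      have e2 : (1/c) ^ ((i:ℝ)+1) ≤ (1 + 1/c) ^ ((i:ℝ)+1) :=
        Real.rpow_le_rpow (by positivity) (by linarith [le_refl (1/c)]) (by positivity)
      have e3 : (1/c) ^ ((i:ℝ)+1) * Real.exp (-(1/2 * (1/c))) ≤ M2 := by
        refine le_trans (mul_le_mul_of_nonneg_right e2 (Real.exp_nonneg _)) ?_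
        exact hM2h (1/c) (by positivity)
      have e4 : (1/c) ^ ((i:ℝ)+1) = (c ^ ((i:ℝ)+1))⁻¹ := by
        rw [one_div, ← Real.rpow_neg_one c, ← Real.rpow_mul hc.le]
        rw [← Real.rpow_neg hc.le]
        congr 1; ring
      have hcp : (0:ℝ) < c ^ ((i:ℝ)+1) := Real.rpow_pos_of_pos hc _
      rw [e4] at e3
      calc Real.exp (-(|y|/2)) ≤ Real.exp (-(1/2 * (1/c))) := e1
        _ = (c ^ ((i:ℝ)+1))⁻¹ * Real.exp (-(1/2 * (1/c))) * c ^ ((i:ℝ)+1) := by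
            field_simp
        _ ≤ M2 * c ^ ((i:ℝ)+1) := mul_le_mul_of_nonneg_right e3 hcp.le
    have key3 : c ^ ((i:ℝ)+1) ≤ c ^ ((i:ℝ) + 1 - k) := by
      apply Real.rpow_le_rpow_of_exponent_ge hc hc1
      have : (0:ℝ) ≤ k := Nat.cast_nonneg k
      linarith
    calc |iteratedDeriv i (P k) y|
        ≤ C * (1 + |y|) ^ r * Real.exp (-|y|) := h y hy
      _ = C * ((1 + |y|) ^ r * Real.exp (-|y|)) := by ring
      _ ≤ C * (M1 * Real.exp (-(|y|/2))) := mul_le_mul_of_nonneg_left key1 hC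
      _ ≤ C * (M1 * (M2 * c ^ ((i:ℝ)+1))) := by
          refine mul_le_mul_of_nonneg_left (mul_le_mul_of_nonneg_left key2 hM1) hC
      _ ≤ C * (M1 * (M2 * c ^ ((i:ℝ)+1-k))) := by
          refine mul_le_mul_of_nonneg_left (mul_le_mul_of_nonneg_left
            (mul_le_mul_of_nonneg_left key3 hM2) hM1) hC
      _ = C * M1 * M2 * c ^ ((i:ℝ) + 1 - k) := by ring

end PB

/-! ### indicator and rpow helpers -/

lemma ind_nonneg (a c x : ℝ) : 0 ≤ ind a c x := by
  unfold ind
  exact Set.indicator_nonneg (fun _ _ => zero_le_one) x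

lemma ind_le_one (a c x : ℝ) : ind a c x ≤ 1 := by
  unfold ind
  classical
  rw [Set.indicator]
  split <;> norm_num

lemma ind_of_mem {a c x : ℝ} (h1 : a ≤ x) (h2 : x ≤ c) : ind a c x = 1 := by
  unfold ind
  rw [Set.indicator_of_mem (Set.mem_Icc.mpr ⟨h1, h2⟩)]

lemma aux_cpow (b γ e : ℝ) : (|b| ^ γ) ^ e = |b| ^ (γ * e) :=
  (Real.rpow_mul (abs_nonneg b) γ e).symm

lemma aux_one_le_rpow {b : ℝ} (hb : 0 < |b|) (hb1 : |b| ≤ 1) {u : ℝ} (hu : u ≤ 0) :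
    1 ≤ |b| ^ u := by
  simpa using Real.rpow_le_rpow_of_exponent_ge hb hb1 hu

lemma aux_mono_mul {a e X : ℝ} (ha : 0 ≤ a) (he : 0 ≤ e) (hX : 1 ≤ X) : a * e ≤ a * (X * e) := by
  nlinarith [mul_nonneg ha he, mul_le_mul_of_nonneg_right hX he, mul_le_mul_of_nonneg_left (mul_le_mul_of_nonneg_right hX he) ha]

lemma aux_pe (r : ℝ) (hr : 0 ≤ r) :
    ∃ M : ℝ, 0 ≤ M ∧ ∀ s : ℝ, 0 ≤ s → (1+s) ^ r * Real.exp (-s) ≤ M * Real.exp (-(s/2)) := by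
  obtain ⟨M, hM, h⟩ := aux_poly_exp r (1/2) hr one_half_pos
  refine ⟨M, hM, fun s hs => ?_⟩
  have e1 : Real.exp (-s) = Real.exp (-(1/2 * s)) * Real.exp (-(s/2)) := by
    rw [← Real.exp_add]; ring_nf
  rw [e1, ← mul_assoc]
  exact mul_le_mul_of_nonneg_right (h s hs) (Real.exp_nonneg _)

section W
variable {K : ℕ} {P : ℕ → ℝ → ℝ}
  (hP : ∀ k : ℕ, 1 ≤ k → k ≤ K → memZ ((k : ℤ) - 1) (P k))
  {γ : ℝ} (hγ₁ : 17 / 20 < γ) (hγ₂ : γ ≤ 1)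
  {χ : ℝ → ℝ} (hχsmooth : ContDiff ℝ (⊤ : ℕ∞) χ)
  (hχ0 : ∀ y : ℝ, 0 ≤ χ y) (hχ1 : ∀ y : ℝ, χ y ≤ 1)
  (hχone : ∀ y : ℝ, -1 ≤ y → χ y = 1) (hχzero : ∀ y : ℝ, y ≤ -2 → χ y = 0)
  {k : ℕ} (hk1 : 1 ≤ k) (hkK : k ≤ K)

lemma auxγ0 (hγ₁ : 17 / 20 < γ) : 0 < γ := lt_trans (by norm_num) hγ₁

include hγ₁ in
lemma aux_c_pos {b : ℝ} (hb : 0 < |b|) : 0 < |b| ^ γ := Real.rpow_pos_of_pos hb γ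

include hγ₁ in
lemma aux_c_le_one {b : ℝ} (hb1 : |b| ≤ 1) : |b| ^ γ ≤ 1 :=
  Real.rpow_le_one (abs_nonneg b) hb1 (auxγ0 hγ₁).le

include hP hγ₁ hχsmooth hχ0 hχ1 hχone hk1 hkK in
/-- In region A the iterated derivative of the product collapses. -/
lemma auxW_collapse (j : ℕ) {b : ℝ} (hb : 0 < |b|) {y : ℝ} (hy : -1 ≤ |b| ^ γ * y) :
    |iteratedDeriv j (fun z => P k z * χ (|b| ^ γ * z)) y| ≤ |iteratedDeriv j (P k) y| := by
  set c := |b| ^ γ with hcdef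
  have hfP : ContDiff ℝ j (P k) := (hP k hk1 hkK).1.of_le (by exact_mod_cast le_top)
  have hχn : ContDiff ℝ j χ := hχsmooth.of_le (by exact_mod_cast le_top)
  have hχc : ContDiff ℝ j (fun z => χ (c * z)) :=
    hχn.comp (contDiff_const.mul contDiff_id)
  refine (aux_leibniz hfP hχc y).trans ?_
  rw [Finset.sum_eq_single_of_mem j (Finset.self_mem_range_succ j) ?side]
  · simp only [Nat.choose_self, Nat.cast_one, one_mul, Nat.sub_self, iteratedDeriv_zero]
    have : |χ (c * y)| ≤ 1 := abs_le.mpr ⟨by linarith [hχ0 (c*y)], hχ1 (c*y)⟩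
    exact mul_le_of_le_one_right (abs_nonneg _) this
  case side =>
    intro i hi hij
    have hij' : i < j := lt_of_le_of_ne (Nat.lt_succ_iff.mp (Finset.mem_range.mp hi)) hij
    have hm : j - i ≠ 0 := by omega
    have hscale := congrFun (iteratedDeriv_comp_const_mul (n := j - i)
      (hχsmooth.of_le (by generalize j - i = m; exact_mod_cast le_top) : ContDiff ℝ ((j - i : ℕ)) χ) c) y
    rw [hscale, auxχ_right hχsmooth hχone (j - i) hm (c * y) hy]
    simp

include hP hγ₁ hγ₂ hχsmooth hχ0 hχ1 hχone hk1 hkK in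
/-- Region A bound. -/
lemma auxW_A (j : ℕ) :
    ∃ C : ℝ, 0 ≤ C ∧ ∀ b : ℝ, 0 < |b| → |b| ≤ 1 → ∀ y : ℝ, -1 ≤ |b| ^ γ * y →
      |iteratedDeriv j (fun z => P k z * χ (|b| ^ γ * z)) y| ≤
        C * (|b| ^ ((1:ℝ) - k) * Real.exp (-|y|/2)
          + |b| ^ ((1:ℝ) + j - k) * ind (-1) 0 (|b| ^ γ * y)) := by
  obtain ⟨C1, r1, hC1, hr1, hA1⟩ := auxP_pos hP hk1 hkK j
  obtain ⟨M1, hM1, hM1h⟩ := aux_pe r1 hr1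
  -- constant for the negative side
  obtain ⟨C2, hC2, hA2⟩ : ∃ C2 : ℝ, 0 ≤ C2 ∧ ∀ b : ℝ, 0 < |b| → |b| ≤ 1 → ∀ y : ℝ,
      -1 ≤ |b| ^ γ * y → y < 0 →
      |iteratedDeriv j (P k) y| ≤ C2 * (|b| ^ ((1:ℝ) - k) * Real.exp (-|y|/2)
          + |b| ^ ((1:ℝ) + j - k) * ind (-1) 0 (|b| ^ γ * y)) := by
    rcases le_or_gt k j with hkj | hjk
    · obtain ⟨C2, r2, hC2, hr2, hA2⟩ := auxP_negexp hP hk1 hkK hkj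
      obtain ⟨M2, hM2, hM2h⟩ := aux_pe r2 hr2
      refine ⟨C2 * M2, by positivity, fun b hb hb1 y hcy hy => ?_⟩
      have key : |iteratedDeriv j (P k) y| ≤ C2 * M2 * Real.exp (-(|y|/2)) := by
        calc |iteratedDeriv j (P k) y| ≤ C2 * (1 + |y|) ^ r2 * Real.exp (-|y|) := hA2 y hy.le
          _ = C2 * ((1 + |y|) ^ r2 * Real.exp (-|y|)) := by ring
          _ ≤ C2 * (M2 * Real.exp (-(|y|/2))) :=
              mul_le_mul_of_nonneg_left (hM2h |y| (abs_nonneg y)) hC2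
          _ = C2 * M2 * Real.exp (-(|y|/2)) := by ring
      have h1 : (1:ℝ) ≤ |b| ^ ((1:ℝ) - k) := by
        apply aux_one_le_rpow hb hb1
        have : (1:ℝ) ≤ (k:ℝ) := by exact_mod_cast hk1
        linarith
      have h2 : 0 ≤ |b| ^ ((1:ℝ) + j - k) * ind (-1) 0 (|b| ^ γ * y) :=
        mul_nonneg (Real.rpow_nonneg (abs_nonneg b) _) (ind_nonneg (-1) 0 (|b| ^ γ * y))
      calc |iteratedDeriv j (P k) y| ≤ C2 * M2 * Real.exp (-(|y|/2)) := key
        _ ≤ C2 * M2 * (|b| ^ ((1:ℝ) - k) * Real.exp (-|y|/2)) := by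
            rw [show -(|y|/2) = -|y|/2 by ring]
            exact aux_mono_mul (mul_nonneg hC2 hM2) (Real.exp_nonneg _) h1
        _ ≤ C2 * M2 * (|b| ^ ((1:ℝ) - k) * Real.exp (-|y|/2)
            + |b| ^ ((1:ℝ) + j - k) * ind (-1) 0 (|b| ^ γ * y)) := by
            nlinarith [mul_nonneg hC2 hM2]
    · obtain ⟨D, hD, hA2⟩ := auxP_negpoly hP hk1 hkK hjk
      refine ⟨D * 2 ^ (((k - 1 - j : ℕ)) : ℝ), by positivity, fun b hb hb1 y hcy hy => ?_⟩
      set c := |b| ^ γ with hcdef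
      have hc : 0 < c := aux_c_pos hγ₁ hb
      have hc1 : c ≤ 1 := aux_c_le_one hγ₁ hb1
      have hyabs : |y| ≤ 1/c := by
        rw [abs_of_neg hy, le_div_iff₀ hc]
        nlinarith
      have h1y : (1:ℝ) + |y| ≤ 2 / c := by
        have h3 : (1:ℝ) ≤ 1/c := by rw [le_div_iff₀ hc]; linarith
        have : (2:ℝ)/c = 1/c + 1/c := by ring
        linarith
      have hn : ((k - 1 - j : ℕ) : ℝ) = (k:ℝ) - 1 - j := by
        have h1 : 1 + j ≤ k := by omega
        have h2 : (k - 1 - j : ℕ) = k - (1 + j) := by omega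
        rw [h2, Nat.cast_sub h1]; push_cast; ring
      have hstep : (1 + |y|) ^ (((k - 1 - j : ℕ)) : ℝ) ≤ (2/c) ^ (((k - 1 - j : ℕ)) : ℝ) :=
        Real.rpow_le_rpow (by positivity) h1y (by positivity)
      have hsplit : (2/c) ^ (((k - 1 - j : ℕ)) : ℝ)
          = 2 ^ (((k - 1 - j : ℕ)) : ℝ) * c ^ (-(((k - 1 - j : ℕ)) : ℝ)) := by
        rw [Real.div_rpow (by norm_num) hc.le, div_eq_mul_inv, ← Real.rpow_neg hc.le]
      have hcb : c ^ (-(((k - 1 - j : ℕ)) : ℝ)) ≤ |b| ^ ((1:ℝ) + j - k) := by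
        rw [hcdef, aux_cpow]
        apply Real.rpow_le_rpow_of_exponent_ge hb hb1
        rw [hn]
        nlinarith [auxγ0 hγ₁]
      have hind : ind (-1) 0 (c * y) = 1 := by
        apply ind_of_mem hcy
        nlinarith
      have key : |iteratedDeriv j (P k) y| ≤
          (D * 2 ^ (((k - 1 - j : ℕ)) : ℝ)) * |b| ^ ((1:ℝ) + j - k) := by
        calc |iteratedDeriv j (P k) y| ≤ D * (1 + |y|) ^ (((k - 1 - j : ℕ)) : ℝ) := hA2 y hy.le
          _ ≤ D * ((2/c) ^ (((k - 1 - j : ℕ)) : ℝ)) := mul_le_mul_of_nonneg_left hstep hD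
          _ = D * 2 ^ (((k - 1 - j : ℕ)) : ℝ) * c ^ (-(((k - 1 - j : ℕ)) : ℝ)) := by
              rw [hsplit]; ring
          _ ≤ D * 2 ^ (((k - 1 - j : ℕ)) : ℝ) * |b| ^ ((1:ℝ) + j - k) := by
              exact mul_le_mul_of_nonneg_left hcb (by positivity)
      rw [hind]
      have hrest : 0 ≤ |b| ^ ((1:ℝ) - k) * Real.exp (-|y|/2) := by positivity
      calc |iteratedDeriv j (P k) y| ≤
          (D * 2 ^ (((k - 1 - j : ℕ)) : ℝ)) * |b| ^ ((1:ℝ) + j - k) := key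
        _ ≤ (D * 2 ^ (((k - 1 - j : ℕ)) : ℝ)) * (|b| ^ ((1:ℝ) - k) * Real.exp (-|y|/2)
            + |b| ^ ((1:ℝ) + j - k) * 1) := by
            nlinarith [mul_nonneg hD (Real.rpow_nonneg (by norm_num : (0:ℝ) ≤ 2)
              (((k - 1 - j : ℕ)) : ℝ))]
  -- combine
  refine ⟨C1 * M1 + C2, by positivity, fun b hb hb1 y hcy => ?_⟩
  refine (auxW_collapse hP hγ₁ hχsmooth hχ0 hχ1 hχone hk1 hkK j hb hcy).trans ?_
  have hterm : 0 ≤ |b| ^ ((1:ℝ) - k) * Real.exp (-|y|/2)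
      + |b| ^ ((1:ℝ) + j - k) * ind (-1) 0 (|b| ^ γ * y) :=
    add_nonneg (mul_nonneg (Real.rpow_nonneg (abs_nonneg b) _) (Real.exp_nonneg _))
      (mul_nonneg (Real.rpow_nonneg (abs_nonneg b) _) (ind_nonneg (-1) 0 (|b| ^ γ * y)))
  rcases lt_or_ge y 0 with hy | hy
  · refine (hA2 b hb hb1 y hcy hy).trans ?_
    nlinarith [mul_nonneg hC1 hM1]
  · have h1 : (1:ℝ) ≤ |b| ^ ((1:ℝ) - k) := by
      apply aux_one_le_rpow hb hb1
      have : (1:ℝ) ≤ (k:ℝ) := by exact_mod_cast hk1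
      linarith
    have key : |iteratedDeriv j (P k) y| ≤ C1 * M1 * Real.exp (-(|y|/2)) := by
      calc |iteratedDeriv j (P k) y| ≤ C1 * (1 + |y|) ^ r1 * Real.exp (-|y|) := hA1 y hy
        _ = C1 * ((1 + |y|) ^ r1 * Real.exp (-|y|)) := by ring
        _ ≤ C1 * (M1 * Real.exp (-(|y|/2))) :=
            mul_le_mul_of_nonneg_left (hM1h |y| (abs_nonneg y)) hC1
        _ = C1 * M1 * Real.exp (-(|y|/2)) := by ring
    have h2 : 0 ≤ |b| ^ ((1:ℝ) + j - k) * ind (-1) 0 (|b| ^ γ * y) :=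
      mul_nonneg (Real.rpow_nonneg (abs_nonneg b) _) (ind_nonneg (-1) 0 (|b| ^ γ * y))
    calc |iteratedDeriv j (P k) y| ≤ C1 * M1 * Real.exp (-(|y|/2)) := key
      _ ≤ C1 * M1 * (|b| ^ ((1:ℝ) - k) * Real.exp (-|y|/2)) := by
          rw [show -(|y|/2) = -|y|/2 by ring]
          exact aux_mono_mul (mul_nonneg hC1 hM1) (Real.exp_nonneg _) h1
      _ ≤ (C1 * M1 + C2) * (|b| ^ ((1:ℝ) - k) * Real.exp (-|y|/2)
          + |b| ^ ((1:ℝ) + j - k) * ind (-1) 0 (|b| ^ γ * y)) := by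
          nlinarith [mul_nonneg hC1 hM1, Real.exp_nonneg (-|y|/2),
            Real.rpow_nonneg (abs_nonneg b) ((1:ℝ) - k),
            mul_nonneg (Real.rpow_nonneg (abs_nonneg b) ((1:ℝ) - k)) (Real.exp_nonneg (-|y|/2))]

end W

section W2
variable {K : ℕ} {P : ℕ → ℝ → ℝ}
  (hP : ∀ k : ℕ, 1 ≤ k → k ≤ K → memZ ((k : ℤ) - 1) (P k))
  {γ : ℝ} (hγ₁ : 17 / 20 < γ) (hγ₂ : γ ≤ 1)
  {χ : ℝ → ℝ} (hχsmooth : ContDiff ℝ (⊤ : ℕ∞) χ)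
  (hχ0 : ∀ y : ℝ, 0 ≤ χ y) (hχ1 : ∀ y : ℝ, χ y ≤ 1)
  (hχone : ∀ y : ℝ, -1 ≤ y → χ y = 1) (hχzero : ∀ y : ℝ, y ≤ -2 → χ y = 0)
  {k : ℕ} (hk1 : 1 ≤ k) (hkK : k ≤ K)

include hP hγ₁ hγ₂ hχsmooth hχ0 hχ1 hχone hχzero hk1 hkK in
/-- Region B bound. -/
lemma auxW_B (j : ℕ) :
    ∃ C : ℝ, 0 ≤ C ∧ ∀ b : ℝ, 0 < |b| → |b| ≤ 1 → ∀ y : ℝ,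
      -2 ≤ |b| ^ γ * y → |b| ^ γ * y ≤ -1 →
      |iteratedDeriv j (fun z => P k z * χ (|b| ^ γ * z)) y| ≤
        C * |b| ^ (1 + (j:ℝ) * γ - k) := by
  choose E hE0 hE using fun i => auxP_B hP hk1 hkK i
  choose M hM0 hM using fun m => auxχ_sup hχsmooth hχ0 hχ1 hχone hχzero m
  refine ⟨∑ i ∈ Finset.range (j+1), (j.choose i : ℝ) * E i * M (j - i),
    Finset.sum_nonneg (fun i _ => mul_nonneg (mul_nonneg (Nat.cast_nonneg _) (hE0 i)) (hM0 _)),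
    fun b hb hb1 y h2 h1 => ?_⟩
  set c := |b| ^ γ with hcdef
  have hc : 0 < c := aux_c_pos hγ₁ hb
  have hc1 : c ≤ 1 := aux_c_le_one hγ₁ hb1
  have hy : y < 0 := by nlinarith
  have hy1 : 1/c ≤ |y| := by rw [abs_of_neg hy, div_le_iff₀ hc]; nlinarith
  have hy2 : |y| ≤ 2/c := by rw [abs_of_neg hy, le_div_iff₀ hc]; nlinarith
  have hfP : ContDiff ℝ j (P k) := (hP k hk1 hkK).1.of_le (by exact_mod_cast le_top)
  have hχc : ContDiff ℝ j (fun z => χ (c * z)) :=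
    (hχsmooth.of_le (by exact_mod_cast le_top) : ContDiff ℝ j χ).comp (contDiff_const.mul contDiff_id)
  refine (aux_leibniz hfP hχc y).trans ?_
  have hterm : ∀ i ∈ Finset.range (j+1),
      (j.choose i : ℝ) * |iteratedDeriv i (P k) y|
        * |iteratedDeriv (j-i) (fun z => χ (c * z)) y|
      ≤ ((j.choose i : ℝ) * E i * M (j - i)) * |b| ^ (1 + (j:ℝ)*γ - k) := by
    intro i hi
    have hij : i ≤ j := Nat.lt_succ_iff.mp (Finset.mem_range.mp hi)
    have hsc := congrFun (iteratedDeriv_comp_const_mul (n := j - i)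
      (hχsmooth.of_le (by generalize j - i = m; exact_mod_cast le_top) : ContDiff ℝ ((j - i : ℕ)) χ) c) y
    rw [hsc]
    have hbP : |iteratedDeriv i (P k) y| ≤ E i * c ^ ((i:ℝ)+1-k) :=
      hE i c y hc hc1 hy.le hy1 hy2
    have hbχ : |c ^ (j-i) * iteratedDeriv (j-i) χ (c*y)| ≤ c ^ (j-i) * M (j-i) := by
      rw [abs_mul, abs_pow, abs_of_pos hc]
      exact mul_le_mul_of_nonneg_left (hM _ _) (pow_nonneg hc.le _)
    have hprod : |iteratedDeriv i (P k) y| * |c ^ (j-i) * iteratedDeriv (j-i) χ (c*y)|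
        ≤ (E i * c ^ ((i:ℝ)+1-k)) * (c ^ (j-i) * M (j-i)) := by
      apply mul_le_mul hbP hbχ (abs_nonneg _)
      exact mul_nonneg (hE0 i) (Real.rpow_nonneg hc.le _)
    have hpow : c ^ ((i:ℝ)+1-k) * c ^ (j-i) = c ^ ((j:ℝ)+1-k) := by
      rw [← Real.rpow_natCast c (j-i), ← Real.rpow_add hc]
      congr 1
      rw [Nat.cast_sub hij]
      ring
    have hcb : c ^ ((j:ℝ)+1-k) ≤ |b| ^ (1+(j:ℝ)*γ-k) := by
      rw [hcdef, aux_cpow]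
      apply Real.rpow_le_rpow_of_exponent_ge hb hb1
      have hk' : (1:ℝ) ≤ (k:ℝ) := by exact_mod_cast hk1
      nlinarith
    have hcomb : (E i * c ^ ((i:ℝ)+1-k)) * (c ^ (j-i) * M (j-i))
        ≤ E i * M (j-i) * |b| ^ (1+(j:ℝ)*γ-k) := by
      calc (E i * c ^ ((i:ℝ)+1-k)) * (c ^ (j-i) * M (j-i))
          = (E i * M (j-i)) * (c ^ ((i:ℝ)+1-k) * c ^ (j-i)) := by ring
        _ = (E i * M (j-i)) * c ^ ((j:ℝ)+1-k) := by rw [hpow]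
        _ ≤ (E i * M (j-i)) * |b| ^ (1+(j:ℝ)*γ-k) :=
            mul_le_mul_of_nonneg_left hcb (mul_nonneg (hE0 i) (hM0 _))
    calc (j.choose i : ℝ) * |iteratedDeriv i (P k) y|
          * |c ^ (j-i) * iteratedDeriv (j-i) χ (c*y)|
        = (j.choose i : ℝ) * (|iteratedDeriv i (P k) y|
            * |c ^ (j-i) * iteratedDeriv (j-i) χ (c*y)|) := by ring
      _ ≤ (j.choose i : ℝ) * ((E i * c ^ ((i:ℝ)+1-k)) * (c ^ (j-i) * M (j-i))) :=
          mul_le_mul_of_nonneg_left hprod (Nat.cast_nonneg _)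
      _ ≤ (j.choose i : ℝ) * (E i * M (j-i) * |b| ^ (1+(j:ℝ)*γ-k)) :=
          mul_le_mul_of_nonneg_left hcomb (Nat.cast_nonneg _)
      _ = ((j.choose i : ℝ) * E i * M (j - i)) * |b| ^ (1 + (j:ℝ)*γ - k) := by ring
  refine (Finset.sum_le_sum hterm).trans (le_of_eq ?_)
  rw [← Finset.sum_mul]

include hP hγ₁ hχsmooth hχzero hk1 hkK in
/-- Region C: everything vanishes. -/
lemma auxW_C (j : ℕ) : ∀ b : ℝ, 0 < |b| → ∀ y : ℝ, |b| ^ γ * y ≤ -2 →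
    |iteratedDeriv j (fun z => P k z * χ (|b| ^ γ * z)) y| ≤ 0 := by
  intro b hb y hcy
  set c := |b| ^ γ with hcdef
  have hfP : ContDiff ℝ j (P k) := (hP k hk1 hkK).1.of_le (by exact_mod_cast le_top)
  have hχc : ContDiff ℝ j (fun z => χ (c * z)) :=
    (hχsmooth.of_le (by exact_mod_cast le_top) : ContDiff ℝ j χ).comp (contDiff_const.mul contDiff_id)
  refine (aux_leibniz hfP hχc y).trans (le_of_eq (Finset.sum_eq_zero ?_))
  intro i hi
  have hsc := congrFun (iteratedDeriv_comp_const_mul (n := j - i)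
    (hχsmooth.of_le (by generalize j - i = m; exact_mod_cast le_top) : ContDiff ℝ ((j - i : ℕ)) χ) c) y
  rw [hsc, auxχ_left hχsmooth hχzero (j - i) (c * y) hcy]
  simp

include hP hγ₁ hγ₂ hχsmooth hχ0 hχ1 hχone hχzero hk1 hkK in
/-- The workhorse bound. -/
lemma auxW (j : ℕ) :
    ∃ C : ℝ, 0 < C ∧ ∀ b : ℝ, 0 < |b| → |b| ≤ 1 → ∀ y : ℝ,
      |iteratedDeriv j (fun z => P k z * χ (|b| ^ γ * z)) y| ≤
        C * (|b| ^ ((1:ℝ) - k) * Real.exp (-|y|/2)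
          + |b| ^ ((1:ℝ) + j - k) * ind (-1) 0 (|b| ^ γ * y)
          + |b| ^ (1 + (j:ℝ) * γ - k) * ind (-2) (-1) (|b| ^ γ * y)) := by
  obtain ⟨CA, hCA, hA⟩ := auxW_A hP hγ₁ hγ₂ hχsmooth hχ0 hχ1 hχone hk1 hkK j
  obtain ⟨CB, hCB, hB⟩ := auxW_B hP hγ₁ hγ₂ hχsmooth hχ0 hχ1 hχone hχzero hk1 hkK j
  refine ⟨CA + CB + 1, by positivity, fun b hb hb1 y => ?_⟩
  have e1 : 0 ≤ |b| ^ ((1:ℝ) - k) * Real.exp (-|y|/2) :=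
    mul_nonneg (Real.rpow_nonneg (abs_nonneg b) _) (Real.exp_nonneg _)
  have e2 : 0 ≤ |b| ^ ((1:ℝ) + j - k) * ind (-1) 0 (|b| ^ γ * y) :=
    mul_nonneg (Real.rpow_nonneg (abs_nonneg b) _) (ind_nonneg _ _ _)
  have e3 : 0 ≤ |b| ^ (1 + (j:ℝ) * γ - k) * ind (-2) (-1) (|b| ^ γ * y) :=
    mul_nonneg (Real.rpow_nonneg (abs_nonneg b) _) (ind_nonneg _ _ _)
  rcases le_or_gt (-1) (|b| ^ γ * y) with hr | hr
  · refine (hA b hb hb1 y hr).trans ?_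
    nlinarith
  rcases le_or_gt (-2) (|b| ^ γ * y) with hr2 | hr2
  · have hind : ind (-2) (-1) (|b| ^ γ * y) = 1 := ind_of_mem hr2 hr.le
    refine (hB b hb hb1 y hr2 hr.le).trans ?_
    rw [hind] at e3 ⊢
    nlinarith [Real.rpow_nonneg (abs_nonneg b) (1 + (j:ℝ) * γ - (k:ℝ))]
  · refine (auxW_C hP hγ₁ hχsmooth hχzero hk1 hkK j b hb y hr2.le).trans ?_
    positivity

end W2

lemma aux_itid1 (x : ℝ) : iteratedDeriv 1 (fun z : ℝ => z) x = 1 := by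
  rw [iteratedDeriv_one]
  exact deriv_id x

lemma aux_itid_ge2 (m : ℕ) (hm : 2 ≤ m) (x : ℝ) :
    iteratedDeriv m (fun z : ℝ => z) x = 0 := by
  obtain ⟨l, rfl⟩ : ∃ l, m = l + 1 := ⟨m - 1, by omega⟩
  rw [iteratedDeriv_succ']
  have h : deriv (fun z : ℝ => z) = fun _ : ℝ => (1:ℝ) := funext fun z => deriv_id z
  rw [h]
  exact aux_itconst l (by omega) 1 x

section W3
variable {K : ℕ} {P : ℕ → ℝ → ℝ}
  (hP : ∀ k : ℕ, 1 ≤ k → k ≤ K → memZ ((k : ℤ) - 1) (P k))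
  {γ : ℝ} (hγ₁ : 17 / 20 < γ) (hγ₂ : γ ≤ 1)
  {χ : ℝ → ℝ} (hχsmooth : ContDiff ℝ (⊤ : ℕ∞) χ)
  (hχ0 : ∀ y : ℝ, 0 ≤ χ y) (hχ1 : ∀ y : ℝ, χ y ≤ 1)
  (hχone : ∀ y : ℝ, -1 ≤ y → χ y = 1) (hχzero : ∀ y : ℝ, y ≤ -2 → χ y = 0)
  {k : ℕ} (hk1 : 1 ≤ k) (hkK : k ≤ K)

include hP hk1 hkK in
lemma aux_yP_bound (i : ℕ) (y : ℝ) :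
    |iteratedDeriv i (fun z => z * P k z) y| ≤
      |y| * |iteratedDeriv i (P k) y| + i * |iteratedDeriv (i-1) (P k) y| := by
  have hid : ContDiff ℝ i (fun z : ℝ => z) := contDiff_id
  have hfP : ContDiff ℝ i (P k) := (hP k hk1 hkK).1.of_le (by exact_mod_cast le_top)
  refine (aux_leibniz hid hfP y).trans ?_
  rcases Nat.eq_zero_or_pos i with rfl | hi
  · simp
  have hsub : ({0, 1} : Finset ℕ) ⊆ Finset.range (i+1) := by
    intro m hm
    simp only [Finset.mem_insert, Finset.mem_singleton] at hm
    rcases hm with rfl | rfl <;> simp [Finset.mem_range] <;> omega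
  rw [← Finset.sum_subset hsub ?zeros]
  · rw [Finset.sum_pair (by norm_num : (0:ℕ) ≠ 1)]
    simp only [Nat.choose_zero_right, Nat.choose_one_right, Nat.cast_one, one_mul,
      iteratedDeriv_zero, Nat.sub_zero]
    rw [aux_itid1 y]
    simp only [abs_one, mul_one]
    exact le_of_eq (by ring)
  case zeros =>
    intro m hm hm2
    simp only [Finset.mem_insert, Finset.mem_singleton, not_or] at hm2
    rw [aux_itid_ge2 m (by omega) y]
    simp

include hP hγ₁ hγ₂ hχsmooth hχ0 hχ1 hχone hχzero hk1 hkK in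
/-- Workhorse bound for the `b`-derivative extra term. -/
lemma auxW' (j : ℕ) :
    ∃ C : ℝ, 0 < C ∧ ∀ b : ℝ, 0 < |b| → |b| ≤ 1 → ∀ y : ℝ,
      |iteratedDeriv j (fun z => (z * P k z) * (deriv χ) (|b| ^ γ * z)) y| ≤
        C * |b| ^ ((j:ℝ) * γ + 1 - γ - k) * ind (-2) (-1) (|b| ^ γ * y) := by
  have hχI : ContDiff ℝ ((⊤ : ℕ∞) : WithTop ℕ∞) χ := hχsmooth.of_le (by simp)
  have hχd : ContDiff ℝ ((⊤ : ℕ∞) : WithTop ℕ∞) (deriv χ) := (contDiff_infty_iff_deriv.mp hχI).2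
  have hχdn : ∀ n : ℕ, ContDiff ℝ n (deriv χ) := fun n => hχd.of_le (by exact_mod_cast le_top)
  have hχd_eq : ∀ (m : ℕ) (t : ℝ), iteratedDeriv m (deriv χ) t = iteratedDeriv (m+1) χ t :=
    fun m t => (congrFun (iteratedDeriv_succ' (n := m) (f := χ)) t).symm
  choose E hE0 hE using fun i => auxP_B hP hk1 hkK i
  choose M hM0 hM using fun m => auxχ_sup hχsmooth hχ0 hχ1 hχone hχzero m
  have hEM0 : ∀ i : ℕ, (0:ℝ) ≤ 2 * E i + i * E (i-1) := fun i =>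
    add_nonneg (mul_nonneg (by norm_num) (hE0 i)) (mul_nonneg (Nat.cast_nonneg i) (hE0 _))
  have hsum0 : (0:ℝ) ≤ ∑ i ∈ Finset.range (j+1),
      (j.choose i : ℝ) * (2 * E i + i * E (i-1)) * M (j-i+1) :=
    Finset.sum_nonneg (fun i _ => mul_nonneg (mul_nonneg (Nat.cast_nonneg _) (hEM0 i)) (hM0 _))
  refine ⟨∑ i ∈ Finset.range (j+1), (j.choose i : ℝ) * (2 * E i + i * E (i-1)) * M (j-i+1) + 1,
    by linarith, fun b hb hb1 y => ?_⟩
  set c := |b| ^ γ with hcdef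
  have hc : 0 < c := aux_c_pos hγ₁ hb
  have hc1 : c ≤ 1 := aux_c_le_one hγ₁ hb1
  have hfyP : ContDiff ℝ j (fun z => z * P k z) :=
    contDiff_id.mul ((hP k hk1 hkK).1.of_le (by exact_mod_cast le_top))
  have hχdc : ContDiff ℝ j (fun z => (deriv χ) (c * z)) :=
    (hχdn j).comp (contDiff_const.mul contDiff_id)
  have hRHS0 : 0 ≤ (∑ i ∈ Finset.range (j+1),
      (j.choose i : ℝ) * (2 * E i + i * E (i-1)) * M (j-i+1) + 1)
      * |b| ^ ((j:ℝ) * γ + 1 - γ - k) * ind (-2) (-1) (c * y) := by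
    have h1 : (0:ℝ) ≤ ∑ i ∈ Finset.range (j+1),
        (j.choose i : ℝ) * (2 * E i + i * E (i-1)) * M (j-i+1) + 1 := by linarith
    exact mul_nonneg (mul_nonneg h1 (Real.rpow_nonneg (abs_nonneg b) _)) (ind_nonneg _ _ _)
  -- outside region B everything vanishes
  have hvanish : ∀ t : ℝ, (-1 ≤ t ∨ t ≤ -2) → ∀ m : ℕ, iteratedDeriv m (deriv χ) t = 0 := by
    intro t ht m
    rw [hχd_eq m t]
    rcases ht with ht | ht
    · exact auxχ_right hχsmooth hχone (m+1) (by omega) t ht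
    · exact auxχ_left hχsmooth hχzero (m+1) t ht
  have hzerocase : ∀ t : ℝ, ((-1:ℝ) ≤ c * y ∨ c * y ≤ -2) →
      |iteratedDeriv j (fun z => (z * P k z) * (deriv χ) (c * z)) y| ≤ 0 := by
    intro _ ht
    refine (aux_leibniz hfyP hχdc y).trans (le_of_eq (Finset.sum_eq_zero ?_))
    intro i hi
    have hsc := congrFun (iteratedDeriv_comp_const_mul (n := j - i) (hχdn (j-i)) c) y
    rw [hsc, hvanish (c*y) ht (j-i)]
    simp
  rcases le_or_gt (-1) (c * y) with hr | hr
  · exact le_trans (hzerocase (c*y) (Or.inl hr)) hRHS0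
  rcases lt_or_ge (c * y) (-2) with hr2 | hr2
  · exact le_trans (hzerocase (c*y) (Or.inr hr2.le)) hRHS0
  -- region B
  have hy : y < 0 := by nlinarith
  have hy1 : 1/c ≤ |y| := by rw [abs_of_neg hy, div_le_iff₀ hc]; nlinarith
  have hy2 : |y| ≤ 2/c := by rw [abs_of_neg hy, le_div_iff₀ hc]; nlinarith
  have hind : ind (-2) (-1) (c * y) = 1 := ind_of_mem hr2 hr.le
  refine (aux_leibniz hfyP hχdc y).trans ?_
  have hterm : ∀ i ∈ Finset.range (j+1),
      (j.choose i : ℝ) * |iteratedDeriv i (fun z => z * P k z) y|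
        * |iteratedDeriv (j-i) (fun z => (deriv χ) (c * z)) y|
      ≤ ((j.choose i : ℝ) * (2 * E i + i * E (i-1)) * M (j-i+1))
          * |b| ^ ((j:ℝ) * γ + 1 - γ - k) := by
    intro i hi
    have hij : i ≤ j := Nat.lt_succ_iff.mp (Finset.mem_range.mp hi)
    have hsc := congrFun (iteratedDeriv_comp_const_mul (n := j - i) (hχdn (j-i)) c) y
    rw [hsc]
    -- bound on the (z * P) factor
    have hP1 : |iteratedDeriv i (P k) y| ≤ E i * c ^ ((i:ℝ)+1-k) :=
      hE i c y hc hc1 hy.le hy1 hy2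
    have hP2 : |iteratedDeriv (i-1) (P k) y| ≤ E (i-1) * c ^ (((i-1:ℕ):ℝ)+1-k) :=
      hE (i-1) c y hc hc1 hy.le hy1 hy2
    have hPc2 : c ^ (((i-1:ℕ):ℝ)+1-k) ≤ c ^ ((i:ℝ)-k) := by
      apply Real.rpow_le_rpow_of_exponent_ge hc hc1
      have : (i:ℝ) - 1 ≤ ((i-1:ℕ):ℝ) := by
        rcases Nat.eq_zero_or_pos i with rfl | hi0
        · norm_num
        · rw [Nat.cast_sub hi0]; norm_num
      linarith
    have hyP : |iteratedDeriv i (fun z => z * P k z) y| ≤ (2 * E i + i * E (i-1)) * c ^ ((i:ℝ)-k) := by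
      refine (aux_yP_bound hP hk1 hkK i y).trans ?_
      have t1 : |y| * |iteratedDeriv i (P k) y| ≤ 2 * E i * c ^ ((i:ℝ)-k) := by
        calc |y| * |iteratedDeriv i (P k) y| ≤ (2/c) * (E i * c ^ ((i:ℝ)+1-k)) := by
              exact mul_le_mul hy2 hP1 (abs_nonneg _) (by positivity)
          _ = 2 * E i * (c ^ ((i:ℝ)+1-k) / c) := by ring
          _ = 2 * E i * c ^ ((i:ℝ)-k) := by
              rw [← Real.rpow_sub_one hc.ne']
              ring_nf
      have t2 : (i:ℝ) * |iteratedDeriv (i-1) (P k) y| ≤ (i:ℝ) * (E (i-1) * c ^ ((i:ℝ)-k)) := by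
        apply mul_le_mul_of_nonneg_left _ (Nat.cast_nonneg i)
        exact hP2.trans (mul_le_mul_of_nonneg_left hPc2 (hE0 _))
      calc |y| * |iteratedDeriv i (P k) y| + i * |iteratedDeriv (i-1) (P k) y|
          ≤ 2 * E i * c ^ ((i:ℝ)-k) + (i:ℝ) * (E (i-1) * c ^ ((i:ℝ)-k)) := by
            exact add_le_add t1 t2
        _ = (2 * E i + i * E (i-1)) * c ^ ((i:ℝ)-k) := by ring
    have hbχ : |c ^ (j-i) * iteratedDeriv (j-i) (deriv χ) (c*y)| ≤ c ^ (j-i) * M (j-i+1) := by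
      rw [abs_mul, abs_pow, abs_of_pos hc]
      refine mul_le_mul_of_nonneg_left ?_ (pow_nonneg hc.le _)
      rw [hχd_eq (j-i) (c*y)]
      exact hM (j-i+1) (c*y)
    have hpow : c ^ ((i:ℝ)-k) * c ^ (j-i) = c ^ ((j:ℝ)-k) := by
      rw [← Real.rpow_natCast c (j-i), ← Real.rpow_add hc]
      congr 1
      rw [Nat.cast_sub hij]
      ring
    have hcb : c ^ ((j:ℝ)-k) ≤ |b| ^ ((j:ℝ)*γ + 1 - γ - k) := by
      rw [hcdef, aux_cpow]
      apply Real.rpow_le_rpow_of_exponent_ge hb hb1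
      have hk' : (1:ℝ) ≤ (k:ℝ) := by exact_mod_cast hk1
      nlinarith
    calc (j.choose i : ℝ) * |iteratedDeriv i (fun z => z * P k z) y|
          * |c ^ (j-i) * iteratedDeriv (j-i) (deriv χ) (c*y)|
        = (j.choose i : ℝ) * (|iteratedDeriv i (fun z => z * P k z) y|
            * |c ^ (j-i) * iteratedDeriv (j-i) (deriv χ) (c*y)|) := by ring
      _ ≤ (j.choose i : ℝ) * (((2 * E i + i * E (i-1)) * c ^ ((i:ℝ)-k)) * (c ^ (j-i) * M (j-i+1))) := by
          refine mul_le_mul_of_nonneg_left ?_ (Nat.cast_nonneg _)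
          refine mul_le_mul hyP hbχ (abs_nonneg _) ?_
          exact mul_nonneg (hEM0 i) (Real.rpow_nonneg hc.le _)
      _ = (j.choose i : ℝ) * ((2 * E i + i * E (i-1)) * M (j-i+1)) * (c ^ ((i:ℝ)-k) * c ^ (j-i)) := by
          ring
      _ = (j.choose i : ℝ) * ((2 * E i + i * E (i-1)) * M (j-i+1)) * c ^ ((j:ℝ)-k) := by
          rw [hpow]
      _ ≤ (j.choose i : ℝ) * ((2 * E i + i * E (i-1)) * M (j-i+1)) * |b| ^ ((j:ℝ)*γ + 1 - γ - k) := by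
          refine mul_le_mul_of_nonneg_left hcb ?_
          exact mul_nonneg (Nat.cast_nonneg _) (mul_nonneg (hEM0 i) (hM0 _))
      _ = ((j.choose i : ℝ) * (2 * E i + i * E (i-1)) * M (j-i+1))
          * |b| ^ ((j:ℝ) * γ + 1 - γ - k) := by ring
  refine (Finset.sum_le_sum hterm).trans ?_
  rw [← Finset.sum_mul, hind, mul_one]
  refine mul_le_mul_of_nonneg_right ?_ (Real.rpow_nonneg (abs_nonneg b) _)
  linarith [le_refl (∑ i ∈ Finset.range (j+1),
    (j.choose i : ℝ) * (2 * E i + i * E (i-1)) * M (j-i+1))]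

end W3

lemma aux_pow_merge {b : ℝ} (hb : 0 < |b|) (m : ℕ) (u v : ℝ) (h : (m:ℝ) + u = v) :
    |b| ^ m * |b| ^ u = |b| ^ v := by
  rw [← Real.rpow_natCast |b| m, ← Real.rpow_add hb, h]

section WK
variable {K : ℕ} {P : ℕ → ℝ → ℝ}
  (hP : ∀ k : ℕ, 1 ≤ k → k ≤ K → memZ ((k : ℤ) - 1) (P k))
  {γ : ℝ} (hγ₁ : 17 / 20 < γ) (hγ₂ : γ ≤ 1)
  {χ : ℝ → ℝ} (hχsmooth : ContDiff ℝ (⊤ : ℕ∞) χ)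
  (hχ0 : ∀ y : ℝ, 0 ≤ χ y) (hχ1 : ∀ y : ℝ, χ y ≤ 1)
  (hχone : ∀ y : ℝ, -1 ≤ y → χ y = 1) (hχzero : ∀ y : ℝ, y ≤ -2 → χ y = 0)
  {k : ℕ} (hk1 : 1 ≤ k) (hkK : k ≤ K)

include hP hγ₁ hγ₂ hχsmooth hχ0 hχ1 hχone hχzero hk1 hkK in
lemma auxW_k1 (j : ℕ) :
    ∃ C : ℝ, 0 < C ∧ ∀ b : ℝ, 0 < |b| → |b| ≤ 1 → ∀ y : ℝ,
      |b| ^ k * |iteratedDeriv j (fun z => P k z * χ (|b| ^ γ * z)) y| ≤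
        C * (|b| * Real.exp (-|y|/2) + |b| ^ (1 + j) * ind (-1) 0 (|b| ^ γ * y)
          + |b| ^ (1 + (j:ℝ) * γ) * ind (-2) (-1) (|b| ^ γ * y)) := by
  obtain ⟨C, hC, h⟩ := auxW hP hγ₁ hγ₂ hχsmooth hχ0 hχ1 hχone hχzero hk1 hkK j
  refine ⟨C, hC, fun b hb hb1 y => ?_⟩
  have id1 : |b| ^ k * (|b| ^ ((1:ℝ) - k) * Real.exp (-|y|/2)) = |b| * Real.exp (-|y|/2) := by
    rw [← mul_assoc, aux_pow_merge hb k ((1:ℝ) - k) 1 (by ring), Real.rpow_one]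
  have id2 : |b| ^ k * (|b| ^ ((1:ℝ) + j - k) * ind (-1) 0 (|b| ^ γ * y))
      = |b| ^ (1 + j) * ind (-1) 0 (|b| ^ γ * y) := by
    rw [← mul_assoc, aux_pow_merge hb k ((1:ℝ) + j - k) (((1 + j : ℕ)):ℝ) (by push_cast; ring),
      Real.rpow_natCast]
  have id3 : |b| ^ k * (|b| ^ (1 + (j:ℝ) * γ - k) * ind (-2) (-1) (|b| ^ γ * y))
      = |b| ^ (1 + (j:ℝ) * γ) * ind (-2) (-1) (|b| ^ γ * y) := by
    rw [← mul_assoc, aux_pow_merge hb k (1 + (j:ℝ) * γ - k) (1 + (j:ℝ) * γ) (by ring)]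
  calc |b| ^ k * |iteratedDeriv j (fun z => P k z * χ (|b| ^ γ * z)) y|
      ≤ |b| ^ k * (C * (|b| ^ ((1:ℝ) - k) * Real.exp (-|y|/2)
          + |b| ^ ((1:ℝ) + j - k) * ind (-1) 0 (|b| ^ γ * y)
          + |b| ^ (1 + (j:ℝ) * γ - k) * ind (-2) (-1) (|b| ^ γ * y))) :=
        mul_le_mul_of_nonneg_left (h b hb hb1 y) (pow_nonneg (abs_nonneg b) k)
    _ = C * (|b| ^ k * (|b| ^ ((1:ℝ) - k) * Real.exp (-|y|/2))
          + |b| ^ k * (|b| ^ ((1:ℝ) + j - k) * ind (-1) 0 (|b| ^ γ * y))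
          + |b| ^ k * (|b| ^ (1 + (j:ℝ) * γ - k) * ind (-2) (-1) (|b| ^ γ * y))) := by ring
    _ = C * (|b| * Real.exp (-|y|/2) + |b| ^ (1 + j) * ind (-1) 0 (|b| ^ γ * y)
          + |b| ^ (1 + (j:ℝ) * γ) * ind (-2) (-1) (|b| ^ γ * y)) := by
        rw [id1, id2, id3]

include hP hγ₁ hγ₂ hχsmooth hχ0 hχ1 hχone hχzero hk1 hkK in
lemma auxW_k2 (j : ℕ) :
    ∃ C : ℝ, 0 < C ∧ ∀ b : ℝ, 0 < |b| → |b| ≤ 1 → ∀ y : ℝ,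
      (k:ℝ) * |b| ^ (k - 1) * |iteratedDeriv j (fun z => P k z * χ (|b| ^ γ * z)) y| ≤
        C * (Real.exp (-|y|/2) + |b| ^ j * ind (-1) 0 (|b| ^ γ * y)
          + |b| ^ ((j:ℝ) * γ) * ind (-2) (-1) (|b| ^ γ * y)) := by
  obtain ⟨C, hC, h⟩ := auxW hP hγ₁ hγ₂ hχsmooth hχ0 hχ1 hχone hχzero hk1 hkK j
  refine ⟨(k:ℝ) * C, by positivity, fun b hb hb1 y => ?_⟩
  have hcast : ((k - 1 : ℕ) : ℝ) = (k:ℝ) - 1 := by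
    rw [Nat.cast_sub hk1]; norm_num
  have id1 : |b| ^ (k-1) * (|b| ^ ((1:ℝ) - k) * Real.exp (-|y|/2)) = Real.exp (-|y|/2) := by
    rw [← mul_assoc, aux_pow_merge hb (k-1) ((1:ℝ) - k) 0 (by rw [hcast]; ring),
      Real.rpow_zero, one_mul]
  have id2 : |b| ^ (k-1) * (|b| ^ ((1:ℝ) + j - k) * ind (-1) 0 (|b| ^ γ * y))
      = |b| ^ j * ind (-1) 0 (|b| ^ γ * y) := by
    rw [← mul_assoc, aux_pow_merge hb (k-1) ((1:ℝ) + j - k) ((j : ℕ):ℝ)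
      (by rw [hcast]; push_cast; ring), Real.rpow_natCast]
  have id3 : |b| ^ (k-1) * (|b| ^ (1 + (j:ℝ) * γ - k) * ind (-2) (-1) (|b| ^ γ * y))
      = |b| ^ ((j:ℝ) * γ) * ind (-2) (-1) (|b| ^ γ * y) := by
    rw [← mul_assoc, aux_pow_merge hb (k-1) (1 + (j:ℝ) * γ - k) ((j:ℝ) * γ)
      (by rw [hcast]; ring)]
  calc (k:ℝ) * |b| ^ (k-1) * |iteratedDeriv j (fun z => P k z * χ (|b| ^ γ * z)) y|
      ≤ (k:ℝ) * (|b| ^ (k-1) * (C * (|b| ^ ((1:ℝ) - k) * Real.exp (-|y|/2)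
          + |b| ^ ((1:ℝ) + j - k) * ind (-1) 0 (|b| ^ γ * y)
          + |b| ^ (1 + (j:ℝ) * γ - k) * ind (-2) (-1) (|b| ^ γ * y)))) := by
        rw [mul_assoc]
        refine mul_le_mul_of_nonneg_left ?_ (Nat.cast_nonneg k)
        exact mul_le_mul_of_nonneg_left (h b hb hb1 y) (pow_nonneg (abs_nonneg b) _)
    _ = (k:ℝ) * C * (|b| ^ (k-1) * (|b| ^ ((1:ℝ) - k) * Real.exp (-|y|/2))
          + |b| ^ (k-1) * (|b| ^ ((1:ℝ) + j - k) * ind (-1) 0 (|b| ^ γ * y))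
          + |b| ^ (k-1) * (|b| ^ (1 + (j:ℝ) * γ - k) * ind (-2) (-1) (|b| ^ γ * y))) := by ring
    _ = (k:ℝ) * C * (Real.exp (-|y|/2) + |b| ^ j * ind (-1) 0 (|b| ^ γ * y)
          + |b| ^ ((j:ℝ) * γ) * ind (-2) (-1) (|b| ^ γ * y)) := by
        rw [id1, id2, id3]

include hP hγ₁ hγ₂ hχsmooth hχ0 hχ1 hχone hχzero hk1 hkK in
lemma auxW_k3 (j : ℕ) :
    ∃ C : ℝ, 0 < C ∧ ∀ b : ℝ, 0 < |b| → |b| ≤ 1 → ∀ y : ℝ,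
      (γ * |b| ^ (γ - 1)) * (|b| ^ k
          * |iteratedDeriv j (fun z => (z * P k z) * (deriv χ) (|b| ^ γ * z)) y|) ≤
        C * (|b| ^ ((j:ℝ) * γ) * ind (-2) (-1) (|b| ^ γ * y)) := by
  obtain ⟨C, hC, h⟩ := auxW' hP hγ₁ hγ₂ hχsmooth hχ0 hχ1 hχone hχzero hk1 hkK j
  have hγ0 := auxγ0 hγ₁
  refine ⟨γ * C, by positivity, fun b hb hb1 y => ?_⟩
  have hstep := h b hb hb1 y
  have id1 : |b| ^ (γ - 1) * (|b| ^ k * |b| ^ ((j:ℝ) * γ + 1 - γ - k)) = |b| ^ ((j:ℝ) * γ) := by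
    rw [aux_pow_merge hb k ((j:ℝ) * γ + 1 - γ - k) ((j:ℝ) * γ + 1 - γ) (by ring)]
    rw [← Real.rpow_add hb]
    congr 1
    ring
  calc (γ * |b| ^ (γ - 1)) * (|b| ^ k
          * |iteratedDeriv j (fun z => (z * P k z) * (deriv χ) (|b| ^ γ * z)) y|)
      ≤ (γ * |b| ^ (γ - 1)) * (|b| ^ k
          * (C * |b| ^ ((j:ℝ) * γ + 1 - γ - k) * ind (-2) (-1) (|b| ^ γ * y))) := by
        refine mul_le_mul_of_nonneg_left (mul_le_mul_of_nonneg_left hstep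
          (pow_nonneg (abs_nonneg b) _)) ?_
        exact mul_nonneg hγ0.le (Real.rpow_nonneg (abs_nonneg b) _)
    _ = (γ * C) * ((|b| ^ (γ - 1) * (|b| ^ k * |b| ^ ((j:ℝ) * γ + 1 - γ - k)))
          * ind (-2) (-1) (|b| ^ γ * y)) := by ring
    _ = (γ * C) * (|b| ^ ((j:ℝ) * γ) * ind (-2) (-1) (|b| ^ γ * y)) := by rw [id1]

end WK

lemma aux_QB_eq (K : ℕ) (P : ℕ → ℝ → ℝ) (χ : ℝ → ℝ) (γ b z : ℝ) :
    QB K P χ γ b z = Q z + ∑ k ∈ Finset.Icc 1 K, b ^ k * (P k z * χ (|b| ^ γ * z)) := by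
  unfold QB RB
  rw [Finset.sum_mul]
  congr 1
  exact Finset.sum_congr rfl (fun k _ => by ring)

section SUM
variable {K : ℕ} {P : ℕ → ℝ → ℝ}
  (hP : ∀ k : ℕ, 1 ≤ k → k ≤ K → memZ ((k : ℤ) - 1) (P k))
  {γ : ℝ} (hγ₁ : 17 / 20 < γ) (hγ₂ : γ ≤ 1)
  {χ : ℝ → ℝ} (hχsmooth : ContDiff ℝ (⊤ : ℕ∞) χ)
  (hχ0 : ∀ y : ℝ, 0 ≤ χ y) (hχ1 : ∀ y : ℝ, χ y ≤ 1)
  (hχone : ∀ y : ℝ, -1 ≤ y → χ y = 1) (hχzero : ∀ y : ℝ, y ≤ -2 → χ y = 0)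

include hP hγ₁ hγ₂ hχsmooth hχ0 hχ1 hχone hχzero in
lemma auxSum2 (j : ℕ) :
    ∃ C : ℝ, 0 < C ∧ ∀ b : ℝ, 0 < |b| → |b| ≤ 1 → ∀ y : ℝ,
      |iteratedDeriv j (fun z => ∑ k ∈ Finset.Icc 1 K, b ^ k * (P k z * χ (|b| ^ γ * z))) y| ≤
        C * (|b| * Real.exp (-|y|/2) + |b| ^ (1 + j) * ind (-1) 0 (|b| ^ γ * y)
          + |b| ^ (1 + (j:ℝ) * γ) * ind (-2) (-1) (|b| ^ γ * y)) := by
  have hex : ∀ k : ℕ, ∃ C : ℝ, 0 < C ∧ (1 ≤ k → k ≤ K → ∀ b : ℝ, 0 < |b| → |b| ≤ 1 → ∀ y : ℝ,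
      |b| ^ k * |iteratedDeriv j (fun z => P k z * χ (|b| ^ γ * z)) y| ≤
        C * (|b| * Real.exp (-|y|/2) + |b| ^ (1 + j) * ind (-1) 0 (|b| ^ γ * y)
          + |b| ^ (1 + (j:ℝ) * γ) * ind (-2) (-1) (|b| ^ γ * y))) := by
    intro k
    by_cases hk : 1 ≤ k ∧ k ≤ K
    · obtain ⟨C, hC, h⟩ := auxW_k1 hP hγ₁ hγ₂ hχsmooth hχ0 hχ1 hχone hχzero hk.1 hk.2 j
      exact ⟨C, hC, fun _ _ => h⟩
    · exact ⟨1, one_pos, fun h1 h2 => absurd ⟨h1, h2⟩ hk⟩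
  choose Ck hCk0 hCk using hex
  refine ⟨(∑ k ∈ Finset.Icc 1 K, Ck k) + 1,
    add_pos_of_nonneg_of_pos (Finset.sum_nonneg fun k _ => (hCk0 k).le) one_pos,
    fun b hb hb1 y => ?_⟩
  set X := |b| * Real.exp (-|y|/2) + |b| ^ (1 + j) * ind (-1) 0 (|b| ^ γ * y)
      + |b| ^ (1 + (j:ℝ) * γ) * ind (-2) (-1) (|b| ^ γ * y) with hX
  have hX0 : 0 ≤ X := by
    rw [hX]
    have i1 := ind_nonneg (-1) 0 (|b| ^ γ * y)
    have i2 := ind_nonneg (-2) (-1) (|b| ^ γ * y)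
    have e1 : (0:ℝ) ≤ |b| ^ (1 + (j:ℝ) * γ) := Real.rpow_nonneg (abs_nonneg b) _
    positivity
  have hsmooth : ∀ k ∈ Finset.Icc 1 K,
      ContDiff ℝ j (fun z => b ^ k * (P k z * χ (|b| ^ γ * z))) := by
    intro k hk
    rw [Finset.mem_Icc] at hk
    exact contDiff_const.mul (((hP k hk.1 hk.2).1.of_le (by exact_mod_cast le_top)).mul
      ((hχsmooth.of_le (by exact_mod_cast le_top) : ContDiff ℝ j χ).comp (contDiff_const.mul contDiff_id)))
  calc |iteratedDeriv j (fun z => ∑ k ∈ Finset.Icc 1 K, b ^ k * (P k z * χ (|b| ^ γ * z))) y|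
      = |∑ k ∈ Finset.Icc 1 K, iteratedDeriv j (fun z => b ^ k * (P k z * χ (|b| ^ γ * z))) y| := by
        rw [aux_itsum _ _ hsmooth y]
    _ ≤ ∑ k ∈ Finset.Icc 1 K, |iteratedDeriv j (fun z => b ^ k * (P k z * χ (|b| ^ γ * z))) y| :=
        Finset.abs_sum_le_sum_abs _ _
    _ = ∑ k ∈ Finset.Icc 1 K, |b| ^ k
          * |iteratedDeriv j (fun z => P k z * χ (|b| ^ γ * z)) y| := by
        refine Finset.sum_congr rfl (fun k hk => ?_)
        rw [Finset.mem_Icc] at hk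
        have hGk : ContDiff ℝ j (fun z => P k z * χ (|b| ^ γ * z)) := by
          exact ((hP k hk.1 hk.2).1.of_le (by exact_mod_cast le_top)).mul
            ((hχsmooth.of_le (by exact_mod_cast le_top) : ContDiff ℝ j χ).comp
              (contDiff_const.mul contDiff_id))
        rw [aux_itconstmul (b^k) hGk y, abs_mul, abs_pow]
    _ ≤ ∑ k ∈ Finset.Icc 1 K, Ck k * X := by
        refine Finset.sum_le_sum (fun k hk => ?_)
        rw [Finset.mem_Icc] at hk
        exact hCk k hk.1 hk.2 b hb hb1 y
    _ = (∑ k ∈ Finset.Icc 1 K, Ck k) * X := by rw [Finset.sum_mul]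
    _ ≤ ((∑ k ∈ Finset.Icc 1 K, Ck k) + 1) * X := by
        refine mul_le_mul_of_nonneg_right ?_ hX0
        linarith

include hP hγ₁ hγ₂ hχsmooth hχ0 hχ1 hχone hχzero in
lemma auxSum3a (j : ℕ) :
    ∃ C : ℝ, 0 < C ∧ ∀ b : ℝ, 0 < |b| → |b| ≤ 1 → ∀ y : ℝ,
      |iteratedDeriv j
          (fun z => ∑ k ∈ Finset.Icc 1 K, (k:ℝ) * b ^ (k-1) * (P k z * χ (|b| ^ γ * z))) y| ≤
        C * (Real.exp (-|y|/2) + |b| ^ j * ind (-1) 0 (|b| ^ γ * y)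
          + |b| ^ ((j:ℝ) * γ) * ind (-2) (-1) (|b| ^ γ * y)) := by
  have hex : ∀ k : ℕ, ∃ C : ℝ, 0 < C ∧ (1 ≤ k → k ≤ K → ∀ b : ℝ, 0 < |b| → |b| ≤ 1 → ∀ y : ℝ,
      (k:ℝ) * |b| ^ (k-1) * |iteratedDeriv j (fun z => P k z * χ (|b| ^ γ * z)) y| ≤
        C * (Real.exp (-|y|/2) + |b| ^ j * ind (-1) 0 (|b| ^ γ * y)
          + |b| ^ ((j:ℝ) * γ) * ind (-2) (-1) (|b| ^ γ * y))) := by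
    intro k
    by_cases hk : 1 ≤ k ∧ k ≤ K
    · obtain ⟨C, hC, h⟩ := auxW_k2 hP hγ₁ hγ₂ hχsmooth hχ0 hχ1 hχone hχzero hk.1 hk.2 j
      exact ⟨C, hC, fun _ _ => h⟩
    · exact ⟨1, one_pos, fun h1 h2 => absurd ⟨h1, h2⟩ hk⟩
  choose Ck hCk0 hCk using hex
  refine ⟨(∑ k ∈ Finset.Icc 1 K, Ck k) + 1,
    add_pos_of_nonneg_of_pos (Finset.sum_nonneg fun k _ => (hCk0 k).le) one_pos,
    fun b hb hb1 y => ?_⟩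
  set X := Real.exp (-|y|/2) + |b| ^ j * ind (-1) 0 (|b| ^ γ * y)
      + |b| ^ ((j:ℝ) * γ) * ind (-2) (-1) (|b| ^ γ * y) with hX
  have hX0 : 0 ≤ X := by
    rw [hX]
    have i1 := ind_nonneg (-1) 0 (|b| ^ γ * y)
    have i2 := ind_nonneg (-2) (-1) (|b| ^ γ * y)
    have e1 : (0:ℝ) ≤ |b| ^ ((j:ℝ) * γ) := Real.rpow_nonneg (abs_nonneg b) _
    positivity
  have hsmooth : ∀ k ∈ Finset.Icc 1 K,
      ContDiff ℝ j (fun z => (k:ℝ) * b ^ (k-1) * (P k z * χ (|b| ^ γ * z))) := by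
    intro k hk
    rw [Finset.mem_Icc] at hk
    exact contDiff_const.mul (((hP k hk.1 hk.2).1.of_le (by exact_mod_cast le_top)).mul
      ((hχsmooth.of_le (by exact_mod_cast le_top) : ContDiff ℝ j χ).comp (contDiff_const.mul contDiff_id)))
  calc |iteratedDeriv j
          (fun z => ∑ k ∈ Finset.Icc 1 K, (k:ℝ) * b ^ (k-1) * (P k z * χ (|b| ^ γ * z))) y|
      = |∑ k ∈ Finset.Icc 1 K,
          iteratedDeriv j (fun z => (k:ℝ) * b ^ (k-1) * (P k z * χ (|b| ^ γ * z))) y| := by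
        rw [aux_itsum _ _ hsmooth y]
    _ ≤ ∑ k ∈ Finset.Icc 1 K,
          |iteratedDeriv j (fun z => (k:ℝ) * b ^ (k-1) * (P k z * χ (|b| ^ γ * z))) y| :=
        Finset.abs_sum_le_sum_abs _ _
    _ = ∑ k ∈ Finset.Icc 1 K, (k:ℝ) * |b| ^ (k-1)
          * |iteratedDeriv j (fun z => P k z * χ (|b| ^ γ * z)) y| := by
        refine Finset.sum_congr rfl (fun k hk => ?_)
        rw [Finset.mem_Icc] at hk
        have hGk : ContDiff ℝ j (fun z => P k z * χ (|b| ^ γ * z)) := by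
          exact ((hP k hk.1 hk.2).1.of_le (by exact_mod_cast le_top)).mul
            ((hχsmooth.of_le (by exact_mod_cast le_top) : ContDiff ℝ j χ).comp
              (contDiff_const.mul contDiff_id))
        rw [aux_itconstmul ((k:ℝ) * b^(k-1)) hGk y, abs_mul, abs_mul, abs_pow,
          Nat.abs_cast]
    _ ≤ ∑ k ∈ Finset.Icc 1 K, Ck k * X := by
        refine Finset.sum_le_sum (fun k hk => ?_)
        rw [Finset.mem_Icc] at hk
        exact hCk k hk.1 hk.2 b hb hb1 y
    _ = (∑ k ∈ Finset.Icc 1 K, Ck k) * X := by rw [Finset.sum_mul]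
    _ ≤ ((∑ k ∈ Finset.Icc 1 K, Ck k) + 1) * X := by
        refine mul_le_mul_of_nonneg_right ?_ hX0
        linarith

include hP hγ₁ hγ₂ hχsmooth hχ0 hχ1 hχone hχzero in
lemma auxSum3b (j : ℕ) :
    ∃ C : ℝ, 0 < C ∧ ∀ b : ℝ, 0 < |b| → |b| ≤ 1 → ∀ y : ℝ,
      (γ * |b| ^ (γ - 1)) * |iteratedDeriv j
          (fun z => ∑ k ∈ Finset.Icc 1 K, b ^ k * ((z * P k z) * (deriv χ) (|b| ^ γ * z))) y| ≤
        C * (|b| ^ ((j:ℝ) * γ) * ind (-2) (-1) (|b| ^ γ * y)) := by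
  have hγ0 := auxγ0 hγ₁
  have hχI : ContDiff ℝ ((⊤ : ℕ∞) : WithTop ℕ∞) χ := hχsmooth.of_le (by simp)
  have hχd : ContDiff ℝ ((⊤ : ℕ∞) : WithTop ℕ∞) (deriv χ) := (contDiff_infty_iff_deriv.mp hχI).2
  have hχdn : ∀ n : ℕ, ContDiff ℝ n (deriv χ) := fun n => hχd.of_le (by exact_mod_cast le_top)
  have hex : ∀ k : ℕ, ∃ C : ℝ, 0 < C ∧ (1 ≤ k → k ≤ K → ∀ b : ℝ, 0 < |b| → |b| ≤ 1 → ∀ y : ℝ,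
      (γ * |b| ^ (γ - 1)) * (|b| ^ k
          * |iteratedDeriv j (fun z => (z * P k z) * (deriv χ) (|b| ^ γ * z)) y|) ≤
        C * (|b| ^ ((j:ℝ) * γ) * ind (-2) (-1) (|b| ^ γ * y))) := by
    intro k
    by_cases hk : 1 ≤ k ∧ k ≤ K
    · obtain ⟨C, hC, h⟩ := auxW_k3 hP hγ₁ hγ₂ hχsmooth hχ0 hχ1 hχone hχzero hk.1 hk.2 j
      exact ⟨C, hC, fun _ _ => h⟩
    · exact ⟨1, one_pos, fun h1 h2 => absurd ⟨h1, h2⟩ hk⟩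
  choose Ck hCk0 hCk using hex
  refine ⟨(∑ k ∈ Finset.Icc 1 K, Ck k) + 1,
    add_pos_of_nonneg_of_pos (Finset.sum_nonneg fun k _ => (hCk0 k).le) one_pos,
    fun b hb hb1 y => ?_⟩
  set X := |b| ^ ((j:ℝ) * γ) * ind (-2) (-1) (|b| ^ γ * y) with hX
  have hX0 : 0 ≤ X := by
    rw [hX]
    exact mul_nonneg (Real.rpow_nonneg (abs_nonneg b) _) (ind_nonneg _ _ _)
  have hsmooth : ∀ k ∈ Finset.Icc 1 K,
      ContDiff ℝ j (fun z => b ^ k * ((z * P k z) * (deriv χ) (|b| ^ γ * z))) := by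
    intro k hk
    rw [Finset.mem_Icc] at hk
    exact contDiff_const.mul ((contDiff_id.mul ((hP k hk.1 hk.2).1.of_le (by exact_mod_cast le_top))).mul
      ((hχdn j).comp (contDiff_const.mul contDiff_id)))
  have hfactor : (0:ℝ) ≤ γ * |b| ^ (γ - 1) :=
    mul_nonneg hγ0.le (Real.rpow_nonneg (abs_nonneg b) _)
  calc (γ * |b| ^ (γ - 1)) * |iteratedDeriv j
          (fun z => ∑ k ∈ Finset.Icc 1 K, b ^ k * ((z * P k z) * (deriv χ) (|b| ^ γ * z))) y|
      = (γ * |b| ^ (γ - 1)) * |∑ k ∈ Finset.Icc 1 K,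
          iteratedDeriv j (fun z => b ^ k * ((z * P k z) * (deriv χ) (|b| ^ γ * z))) y| := by
        rw [aux_itsum _ _ hsmooth y]
    _ ≤ (γ * |b| ^ (γ - 1)) * ∑ k ∈ Finset.Icc 1 K,
          |iteratedDeriv j (fun z => b ^ k * ((z * P k z) * (deriv χ) (|b| ^ γ * z))) y| :=
        mul_le_mul_of_nonneg_left (Finset.abs_sum_le_sum_abs _ _) hfactor
    _ = ∑ k ∈ Finset.Icc 1 K, (γ * |b| ^ (γ - 1)) * (|b| ^ k
          * |iteratedDeriv j (fun z => (z * P k z) * (deriv χ) (|b| ^ γ * z)) y|) := by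
        rw [Finset.mul_sum]
        refine Finset.sum_congr rfl (fun k hk => ?_)
        rw [Finset.mem_Icc] at hk
        have hGk : ContDiff ℝ j (fun z => (z * P k z) * (deriv χ) (|b| ^ γ * z)) := by
          exact (contDiff_id.mul ((hP k hk.1 hk.2).1.of_le (by exact_mod_cast le_top))).mul
            ((hχdn j).comp (contDiff_const.mul contDiff_id))
        rw [aux_itconstmul (b^k) hGk y, abs_mul, abs_pow]
    _ ≤ ∑ k ∈ Finset.Icc 1 K, Ck k * X := by
        refine Finset.sum_le_sum (fun k hk => ?_)
        rw [Finset.mem_Icc] at hk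
        exact hCk k hk.1 hk.2 b hb hb1 y
    _ = (∑ k ∈ Finset.Icc 1 K, Ck k) * X := by rw [Finset.sum_mul]
    _ ≤ ((∑ k ∈ Finset.Icc 1 K, Ck k) + 1) * X := by
        refine mul_le_mul_of_nonneg_right ?_ hX0
        linarith

end SUM

lemma aux_absrpow_deriv {γ : ℝ} (hγ0 : 0 < γ) {b : ℝ} (hb : b ≠ 0) :
    ∃ d : ℝ, HasDerivAt (fun b' : ℝ => |b'| ^ γ) d b ∧ |d| = γ * |b| ^ (γ - 1) := by
  rcases lt_or_gt_of_ne hb with hneg | hpos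
  · have hinner : HasDerivAt (fun b' : ℝ => -b') (-1) b := (hasDerivAt_id b).neg
    have h := hinner.rpow_const (p := γ) (Or.inl (by simpa using hneg.ne))
    have hev : (fun b' : ℝ => |b'| ^ γ) =ᶠ[𝓝 b] fun b' => (-b') ^ γ := by
      filter_upwards [Iio_mem_nhds hneg] with s hs
      rw [abs_of_neg hs]
    refine ⟨-1 * γ * (-b) ^ (γ - 1), HasDerivAt.congr_of_eventuallyEq h hev, ?_⟩
    rw [abs_mul, abs_mul, abs_neg, abs_one, one_mul]
    rw [abs_of_pos hγ0, abs_of_nonneg (Real.rpow_nonneg (by linarith) _), abs_of_neg hneg]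
  · have hinner : HasDerivAt (fun b' : ℝ => b') 1 b := hasDerivAt_id b
    have h := hinner.rpow_const (p := γ) (Or.inl hpos.ne')
    have hev : (fun b' : ℝ => |b'| ^ γ) =ᶠ[𝓝 b] fun b' => b' ^ γ := by
      filter_upwards [Ioi_mem_nhds hpos] with s hs
      rw [abs_of_pos hs]
    refine ⟨1 * γ * b ^ (γ - 1), HasDerivAt.congr_of_eventuallyEq h hev, ?_⟩
    rw [one_mul, abs_mul]
    rw [abs_of_pos hγ0, abs_of_nonneg (Real.rpow_nonneg (by linarith) _), abs_of_pos hpos]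

section DB
variable {K : ℕ} {P : ℕ → ℝ → ℝ}
  {γ : ℝ} (hγ₁ : 17 / 20 < γ) (hγ₂ : γ ≤ 1)
  {χ : ℝ → ℝ} (hχsmooth : ContDiff ℝ (⊤ : ℕ∞) χ)

include hγ₁ hχsmooth in
lemma aux_deriv_b {b : ℝ} (hb : 0 < |b|) :
    ∃ d : ℝ, |d| = γ * |b| ^ (γ - 1) ∧ ∀ z : ℝ,
      deriv (fun b' => QB K P χ γ b' z) b =
        (∑ k ∈ Finset.Icc 1 K, (k:ℝ) * b ^ (k-1) * (P k z * χ (|b| ^ γ * z)))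
        + d * (∑ k ∈ Finset.Icc 1 K, b ^ k * ((z * P k z) * (deriv χ) (|b| ^ γ * z))) := by
  have hγ0 := auxγ0 hγ₁
  have hb0 : b ≠ 0 := by
    intro h
    rw [h, abs_zero] at hb
    exact lt_irrefl 0 hb
  obtain ⟨d, hd, habs⟩ := aux_absrpow_deriv hγ0 hb0
  refine ⟨d, habs, fun z => ?_⟩
  have hχdiff : Differentiable ℝ χ := (hχsmooth.of_le (by exact_mod_cast le_top :
    ((1:ℕ) : WithTop ℕ∞) ≤ ((⊤ : ℕ∞) : WithTop ℕ∞))).differentiable (by simp)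
  have hterm : ∀ k ∈ Finset.Icc 1 K,
      HasDerivAt (fun b' => b' ^ k * (P k z * χ (|b'| ^ γ * z)))
        ((k:ℝ) * b ^ (k-1) * (P k z * χ (|b| ^ γ * z))
          + b ^ k * (P k z * ((deriv χ) (|b| ^ γ * z) * (d * z)))) b := by
    intro k _
    have hu : HasDerivAt (fun b' : ℝ => b' ^ k) ((k:ℝ) * b ^ (k-1)) b := by
      simpa using hasDerivAt_pow k b
    have hw : HasDerivAt (fun b' : ℝ => |b'| ^ γ * z) (d * z) b := hd.mul_const z
    have hχat : HasDerivAt χ ((deriv χ) (|b| ^ γ * z)) (|b| ^ γ * z) :=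
      (hχdiff (|b| ^ γ * z)).hasDerivAt
    have hv : HasDerivAt (fun b' : ℝ => χ (|b'| ^ γ * z))
        ((deriv χ) (|b| ^ γ * z) * (d * z)) b := hχat.comp b hw
    have hv' : HasDerivAt (fun b' : ℝ => P k z * χ (|b'| ^ γ * z))
        (P k z * ((deriv χ) (|b| ^ γ * z) * (d * z))) b := hv.const_mul (P k z)
    exact hu.mul hv'
  have hsum := HasDerivAt.fun_sum hterm
  have htot := hsum.const_add (Q z)
  have hfun : (fun b' => QB K P χ γ b' z)
      = fun b' => Q z + ∑ k ∈ Finset.Icc 1 K, b' ^ k * (P k z * χ (|b'| ^ γ * z)) :=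
    funext fun b' => aux_QB_eq K P χ γ b' z
  rw [hfun, htot.deriv]
  rw [Finset.sum_add_distrib, Finset.mul_sum]
  congr 1
  refine Finset.sum_congr rfl (fun k _ => ?_)
  ring

end DB

set_option maxHeartbeats 2000000 in
/-- Estimates on the localized profiles `Q_b` and on `∂Q_b/∂b`. -/
theorem localized_profile_estimates (K : ℕ) (hK : 1 ≤ K) (P : ℕ → ℝ → ℝ)
    (hP : ∀ k : ℕ, 1 ≤ k → k ≤ K → memZ ((k : ℤ) - 1) (P k))
    (γ : ℝ) (hγ₁ : 17 / 20 < γ) (hγ₂ : γ ≤ 1)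
    (χ : ℝ → ℝ) (hχsmooth : ContDiff ℝ (⊤ : ℕ∞) χ) (hχmono : Monotone χ)
    (hχ0 : ∀ y : ℝ, 0 ≤ χ y) (hχ1 : ∀ y : ℝ, χ y ≤ 1)
    (hχone : ∀ y : ℝ, -1 ≤ y → χ y = 1) (hχzero : ∀ y : ℝ, y ≤ -2 → χ y = 0) :
    ∀ j : ℕ, ∃ C : ℝ, 0 < C ∧ ∀ b : ℝ, 0 < |b| → |b| ≤ 1 → ∀ y : ℝ,
      (|iteratedDeriv j (QB K P χ γ b) y| ≤
        C * (Real.exp (-|y| / 2) + |b| ^ (1 + j) * ind (-1) 0 (|b| ^ γ * y)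
          + |b| ^ (1 + (j : ℝ) * γ) * ind (-2) (-1) (|b| ^ γ * y))) ∧
      (|iteratedDeriv j (fun z => QB K P χ γ b z - Q z) y| ≤
        C * (|b| * Real.exp (-|y| / 2) + |b| ^ (1 + j) * ind (-1) 0 (|b| ^ γ * y)
          + |b| ^ (1 + (j : ℝ) * γ) * ind (-2) (-1) (|b| ^ γ * y)) ∧
        |iteratedDeriv j (fun z => QB K P χ γ b z - Q z) y| ≤ C * |b|) ∧
      (|iteratedDeriv j (fun z => deriv (fun b' => QB K P χ γ b' z) b) y| ≤
        C * (Real.exp (-|y| / 2) + |b| ^ j * ind (-1) 0 (|b| ^ γ * y)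
          + |b| ^ ((j : ℝ) * γ) * ind (-2) (-1) (|b| ^ γ * y))) := by
  intro j
  obtain ⟨CQ, hCQ0, hQb⟩ := auxQ_bound j
  obtain ⟨C2, hC20, h2⟩ := auxSum2 hP hγ₁ hγ₂ hχsmooth hχ0 hχ1 hχone hχzero j
  obtain ⟨C3a, hC3a0, h3a⟩ := auxSum3a hP hγ₁ hγ₂ hχsmooth hχ0 hχ1 hχone hχzero j
  obtain ⟨C3b, hC3b0, h3b⟩ := auxSum3b hP hγ₁ hγ₂ hχsmooth hχ0 hχ1 hχone hχzero j
  refine ⟨CQ + 4*C2 + C3a + C3b + 1, by linarith, fun b hb hb1 y => ?_⟩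
  have hγ0 := auxγ0 hγ₁
  have hχdn : ∀ n : ℕ, ContDiff ℝ n (deriv χ) := by
    have hχI : ContDiff ℝ ((⊤ : ℕ∞) : WithTop ℕ∞) χ := hχsmooth.of_le (by simp)
    exact fun n => ((contDiff_infty_iff_deriv.mp hχI).2).of_le (by exact_mod_cast le_top)
  -- nonnegativity facts
  have hI1 := ind_nonneg (-1) 0 (|b| ^ γ * y)
  have hI1' := ind_le_one (-1) 0 (|b| ^ γ * y)
  have hI2 := ind_nonneg (-2) (-1) (|b| ^ γ * y)
  have hI2' := ind_le_one (-2) (-1) (|b| ^ γ * y)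
  have hexp0 : 0 ≤ Real.exp (-|y| / 2) := Real.exp_nonneg _
  have hexp1 : Real.exp (-|y| / 2) ≤ 1 := by
    rw [Real.exp_le_one_iff]
    have := abs_nonneg y
    linarith
  have hp1 : (0:ℝ) ≤ |b| ^ (1 + j) := pow_nonneg (abs_nonneg b) _
  have hp2 : (0:ℝ) ≤ |b| ^ (1 + (j:ℝ)*γ) := Real.rpow_nonneg (abs_nonneg b) _
  have hp3 : (0:ℝ) ≤ |b| ^ j := pow_nonneg (abs_nonneg b) _
  have hp4 : (0:ℝ) ≤ |b| ^ ((j:ℝ)*γ) := Real.rpow_nonneg (abs_nonneg b) _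
  -- the function S
  have hSfun : (fun z => QB K P χ γ b z - Q z)
      = fun z => ∑ k ∈ Finset.Icc 1 K, b ^ k * (P k z * χ (|b| ^ γ * z)) := by
    funext z
    rw [aux_QB_eq]
    ring
  have hSsmooth : ContDiff ℝ j
      (fun z => ∑ k ∈ Finset.Icc 1 K, b ^ k * (P k z * χ (|b| ^ γ * z))) := by
    refine ContDiff.sum (fun k hk => ?_)
    rw [Finset.mem_Icc] at hk
    exact contDiff_const.mul (((hP k hk.1 hk.2).1.of_le (by exact_mod_cast le_top)).mul
      ((hχsmooth.of_le (by exact_mod_cast le_top) : ContDiff ℝ j χ).comp (contDiff_const.mul contDiff_id)))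
  have hS := h2 b hb hb1 y
  -- part 2 (first inequality)
  have part2a : |iteratedDeriv j (fun z => QB K P χ γ b z - Q z) y| ≤
      (CQ + 4*C2 + C3a + C3b + 1) * (|b| * Real.exp (-|y| / 2)
        + |b| ^ (1 + j) * ind (-1) 0 (|b| ^ γ * y)
        + |b| ^ (1 + (j : ℝ) * γ) * ind (-2) (-1) (|b| ^ γ * y)) := by
    rw [hSfun]
    refine hS.trans ?_
    refine mul_le_mul_of_nonneg_right (by linarith) ?_
    have : (0:ℝ) ≤ |b| * Real.exp (-|y| / 2) := mul_nonneg (abs_nonneg b) hexp0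
    positivity
  -- part 2 (second inequality)
  have hX2le : |b| * Real.exp (-|y| / 2) + |b| ^ (1 + j) * ind (-1) 0 (|b| ^ γ * y)
      + |b| ^ (1 + (j : ℝ) * γ) * ind (-2) (-1) (|b| ^ γ * y) ≤ 3 * |b| := by
    have t1 : |b| * Real.exp (-|y| / 2) ≤ |b| :=
      mul_le_of_le_one_right (abs_nonneg b) hexp1
    have t2 : |b| ^ (1 + j) * ind (-1) 0 (|b| ^ γ * y) ≤ |b| := by
      have h1 : |b| ^ (1 + j) * ind (-1) 0 (|b| ^ γ * y) ≤ |b| ^ (1 + j) :=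
        mul_le_of_le_one_right hp1 hI1'
      have h2' : |b| ^ (1 + j) ≤ |b| ^ 1 :=
        pow_le_pow_of_le_one (abs_nonneg b) hb1 (by omega)
      rw [pow_one] at h2'
      linarith
    have t3 : |b| ^ (1 + (j:ℝ)*γ) * ind (-2) (-1) (|b| ^ γ * y) ≤ |b| := by
      have h1 : |b| ^ (1 + (j:ℝ)*γ) * ind (-2) (-1) (|b| ^ γ * y) ≤ |b| ^ (1 + (j:ℝ)*γ) :=
        mul_le_of_le_one_right hp2 hI2'
      have h2' : |b| ^ (1 + (j:ℝ)*γ) ≤ |b| ^ (1:ℝ) := by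
        apply Real.rpow_le_rpow_of_exponent_ge hb hb1
        have : (0:ℝ) ≤ (j:ℝ) * γ := mul_nonneg (Nat.cast_nonneg j) hγ0.le
        linarith
      rw [Real.rpow_one] at h2'
      linarith
    linarith
  have part2b : |iteratedDeriv j (fun z => QB K P χ γ b z - Q z) y| ≤
      (CQ + 4*C2 + C3a + C3b + 1) * |b| := by
    rw [hSfun]
    refine hS.trans ?_
    calc C2 * (|b| * Real.exp (-|y| / 2) + |b| ^ (1 + j) * ind (-1) 0 (|b| ^ γ * y)
        + |b| ^ (1 + (j : ℝ) * γ) * ind (-2) (-1) (|b| ^ γ * y))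
        ≤ C2 * (3 * |b|) := mul_le_mul_of_nonneg_left hX2le hC20.le
      _ ≤ (CQ + 4*C2 + C3a + C3b + 1) * |b| := by nlinarith [abs_nonneg b]
  -- part 1
  have part1 : |iteratedDeriv j (QB K P χ γ b) y| ≤
      (CQ + 4*C2 + C3a + C3b + 1) * (Real.exp (-|y| / 2)
        + |b| ^ (1 + j) * ind (-1) 0 (|b| ^ γ * y)
        + |b| ^ (1 + (j : ℝ) * γ) * ind (-2) (-1) (|b| ^ γ * y)) := by
    have hQBfun : QB K P χ γ b
        = fun z => Q z + ∑ k ∈ Finset.Icc 1 K, b ^ k * (P k z * χ (|b| ^ γ * z)) :=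
      funext fun z => aux_QB_eq K P χ γ b z
    have hsplit : iteratedDeriv j (QB K P χ γ b) y = iteratedDeriv j Q y
        + iteratedDeriv j (fun z => ∑ k ∈ Finset.Icc 1 K, b ^ k * (P k z * χ (|b|^γ * z))) y := by
      rw [hQBfun]
      exact aux_itadd (auxQ_contDiff j) hSsmooth y
    rw [hsplit]
    refine (abs_add_le _ _).trans ?_
    have hQ := hQb y
    have hbexp : |b| * Real.exp (-|y| / 2) ≤ Real.exp (-|y| / 2) :=
      mul_le_of_le_one_left hexp0 hb1
    have hS2 : |iteratedDeriv j
        (fun z => ∑ k ∈ Finset.Icc 1 K, b ^ k * (P k z * χ (|b|^γ * z))) y| ≤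
        C2 * (Real.exp (-|y| / 2) + |b| ^ (1 + j) * ind (-1) 0 (|b| ^ γ * y)
          + |b| ^ (1 + (j : ℝ) * γ) * ind (-2) (-1) (|b| ^ γ * y)) := by
      refine hS.trans ?_
      refine mul_le_mul_of_nonneg_left ?_ hC20.le
      linarith
    have hQ' : |iteratedDeriv j Q y| ≤ CQ * (Real.exp (-|y| / 2)
        + |b| ^ (1 + j) * ind (-1) 0 (|b| ^ γ * y)
        + |b| ^ (1 + (j : ℝ) * γ) * ind (-2) (-1) (|b| ^ γ * y)) := by
      refine (hQb y).trans ?_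
      have h0 : 0 ≤ |b| ^ (1 + j) * ind (-1) 0 (|b| ^ γ * y) := mul_nonneg hp1 hI1
      have h0' : 0 ≤ |b| ^ (1 + (j:ℝ)*γ) * ind (-2) (-1) (|b| ^ γ * y) := mul_nonneg hp2 hI2
      nlinarith
    have hrhs0 : 0 ≤ Real.exp (-|y| / 2) + |b| ^ (1 + j) * ind (-1) 0 (|b| ^ γ * y)
        + |b| ^ (1 + (j : ℝ) * γ) * ind (-2) (-1) (|b| ^ γ * y) := by
      have h0 : 0 ≤ |b| ^ (1 + j) * ind (-1) 0 (|b| ^ γ * y) := mul_nonneg hp1 hI1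
      have h0' : 0 ≤ |b| ^ (1 + (j:ℝ)*γ) * ind (-2) (-1) (|b| ^ γ * y) := mul_nonneg hp2 hI2
      linarith
    nlinarith
  -- part 3
  obtain ⟨d, hdabs, hdfun⟩ := aux_deriv_b hγ₁ hχsmooth (K := K) (P := P) hb
  have part3 : |iteratedDeriv j (fun z => deriv (fun b' => QB K P χ γ b' z) b) y| ≤
      (CQ + 4*C2 + C3a + C3b + 1) * (Real.exp (-|y| / 2)
        + |b| ^ j * ind (-1) 0 (|b| ^ γ * y)
        + |b| ^ ((j : ℝ) * γ) * ind (-2) (-1) (|b| ^ γ * y)) := by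
    have hfun3 : (fun z => deriv (fun b' => QB K P χ γ b' z) b)
        = fun z => (∑ k ∈ Finset.Icc 1 K, (k:ℝ) * b ^ (k-1) * (P k z * χ (|b| ^ γ * z)))
          + d * (∑ k ∈ Finset.Icc 1 K, b ^ k * ((z * P k z) * (deriv χ) (|b| ^ γ * z))) :=
      funext fun z => hdfun z
    have hF1smooth : ContDiff ℝ j
        (fun z => ∑ k ∈ Finset.Icc 1 K, (k:ℝ) * b ^ (k-1) * (P k z * χ (|b| ^ γ * z))) := by
      refine ContDiff.sum (fun k hk => ?_)
      rw [Finset.mem_Icc] at hk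
      exact contDiff_const.mul (((hP k hk.1 hk.2).1.of_le (by exact_mod_cast le_top)).mul
        ((hχsmooth.of_le (by exact_mod_cast le_top) : ContDiff ℝ j χ).comp (contDiff_const.mul contDiff_id)))
    have hSdsmooth : ContDiff ℝ j
        (fun z => ∑ k ∈ Finset.Icc 1 K, b ^ k * ((z * P k z) * (deriv χ) (|b| ^ γ * z))) := by
      refine ContDiff.sum (fun k hk => ?_)
      rw [Finset.mem_Icc] at hk
      exact contDiff_const.mul ((contDiff_id.mul ((hP k hk.1 hk.2).1.of_le (by exact_mod_cast le_top))).mul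
        ((hχdn j).comp (contDiff_const.mul contDiff_id)))
    have hF2smooth : ContDiff ℝ j
        (fun z => d * ∑ k ∈ Finset.Icc 1 K, b ^ k * ((z * P k z) * (deriv χ) (|b| ^ γ * z))) :=
      contDiff_const.mul hSdsmooth
    have hsplit : iteratedDeriv j (fun z => deriv (fun b' => QB K P χ γ b' z) b) y =
        iteratedDeriv j
          (fun z => ∑ k ∈ Finset.Icc 1 K, (k:ℝ) * b ^ (k-1) * (P k z * χ (|b| ^ γ * z))) y
        + iteratedDeriv j
          (fun z => d * ∑ k ∈ Finset.Icc 1 K, b ^ k * ((z * P k z) * (deriv χ) (|b|^γ * z))) y := by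
      rw [hfun3]
      exact aux_itadd hF1smooth hF2smooth y
    rw [hsplit]
    refine (abs_add_le _ _).trans ?_
    have hF1 := h3a b hb hb1 y
    have hF2 : |iteratedDeriv j
        (fun z => d * ∑ k ∈ Finset.Icc 1 K, b ^ k * ((z * P k z) * (deriv χ) (|b|^γ * z))) y| ≤
        C3b * (|b| ^ ((j:ℝ) * γ) * ind (-2) (-1) (|b| ^ γ * y)) := by
      rw [aux_itconstmul d hSdsmooth y, abs_mul, hdabs]
      exact h3b b hb hb1 y
    have h0 : 0 ≤ |b| ^ j * ind (-1) 0 (|b| ^ γ * y) := mul_nonneg hp3 hI1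
    have h0' : 0 ≤ |b| ^ ((j:ℝ)*γ) * ind (-2) (-1) (|b| ^ γ * y) := mul_nonneg hp4 hI2
    nlinarith
  exact ⟨part1, ⟨part2a, part2b⟩, part3⟩
end

section
/- Let 0 < a₀ < 1 and c₀ > 0. Let v : ℝ → ℝ be continuously differentiable and suppose there exist R₀ > 0 and C > 0 such that for all R ≥ R₀: v² and (v')² are integrable on (−∞, −R], |∫_{x < −R} v(x)² dx − c₀·R^{−2}| ≤ C·R^{−2−a₀}, and ∫_{x < −R} v'(x)² dx ≤ C·R^{−4}. Then there exist R₁ > 0 and C' > 0 such that for all R ≥ R₁: |v(−R)² − 2·c₀·R^{−3}| ≤ C'·R^{−3−a} with a = a₀/3. -/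
/-!
Write `F R = ∫_{x < -R} v²`. On the window `[-(R + h), -R]` the mass `F R - F (R + h)` is
`c₀ (R⁻² - (R + h)⁻²) ≈ 2 c₀ h R⁻³` up to `O(R^(-2-a₀) + h² R⁻⁴)`. By the fundamental theorem of
calculus and `2 |v v'| ≤ ε v² + ε⁻¹ v'²`, on the window `v²` stays within
`ε · mass + ε⁻¹ ∫ v'²` of `v(-R)²`, so averaging over the window pins down `v(-R)²`.
The choice `h = R^(1 - 2a₀/3)`, `ε = R^(a₀/3 - 1)` balances all errors at order `R^(-3-a₀/3)`.
-/

open MeasureTheory Set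
open scoped Interval

lemma abs_one_div_sq_sub_one_div_sq_sub_le {R h : ℝ} (hR : 0 < R) (hh : 0 ≤ h) :
    |1 / R ^ 2 - 1 / (R + h) ^ 2 - 2 * h / R ^ 3| ≤ 3 * h ^ 2 / R ^ 4 := by
  have hRh : 0 < R + h := by linarith
  have key : 1 / R ^ 2 - 1 / (R + h) ^ 2 - 2 * h / R ^ 3
      = -(h ^ 2 * (3 * R + 2 * h) / (R ^ 3 * (R + h) ^ 2)) := by
    field_simp
    ring
  rw [key, abs_neg, abs_of_nonneg (by positivity), div_le_div_iff₀ (by positivity) (by positivity)]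
  have hquad : (3 * R + 2 * h) * R ≤ 3 * (R + h) ^ 2 := by nlinarith
  calc h ^ 2 * (3 * R + 2 * h) * R ^ 4 = h ^ 2 * R ^ 3 * ((3 * R + 2 * h) * R) := by ring
    _ ≤ h ^ 2 * R ^ 3 * (3 * (R + h) ^ 2) := by gcongr
    _ = 3 * h ^ 2 * (R ^ 3 * (R + h) ^ 2) := by ring

lemma abs_two_mul_mul_le {ε : ℝ} (hε : 0 < ε) (x y : ℝ) :
    |2 * x * y| ≤ ε * x ^ 2 + ε⁻¹ * y ^ 2 := by
  have hεε : ε * ε⁻¹ = 1 := mul_inv_cancel₀ hε.ne'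
  rw [abs_le]
  constructor <;>
  nlinarith [mul_nonneg (inv_nonneg.2 hε.le) (sq_nonneg (ε * x + y)),
    mul_nonneg (inv_nonneg.2 hε.le) (sq_nonneg (ε * x - y))]

lemma abs_sq_sub_sq_le_of_contDiff {v : ℝ → ℝ} (hv : ContDiff ℝ 1 v) {a b ε : ℝ} (hab : a ≤ b)
    (hε : 0 < ε) :
    |v b ^ 2 - v a ^ 2| ≤ ε * (∫ t in a..b, v t ^ 2) + ε⁻¹ * ∫ t in a..b, deriv v t ^ 2 := by
  have hvc : Continuous v := hv.continuous
  have hv'c : Continuous (deriv v) := hv.continuous_deriv le_rfl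
  have hderiv : ∀ t, HasDerivAt (fun x => v x ^ 2) (2 * v t * deriv v t) t := fun t => by
    simpa using (hv.differentiable one_ne_zero t).hasDerivAt.fun_pow 2
  have hftc : ∫ t in a..b, 2 * v t * deriv v t = v b ^ 2 - v a ^ 2 :=
    intervalIntegral.integral_eq_sub_of_hasDerivAt (fun t _ => hderiv t)
      (((continuous_const.mul hvc).mul hv'c).intervalIntegrable _ _)
  calc |v b ^ 2 - v a ^ 2| = |∫ t in a..b, 2 * v t * deriv v t| := by rw [hftc]
    _ ≤ ∫ t in a..b, |2 * v t * deriv v t| := intervalIntegral.abs_integral_le_integral_abs hab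
    _ ≤ ∫ t in a..b, (ε * v t ^ 2 + ε⁻¹ * deriv v t ^ 2) :=
      intervalIntegral.integral_mono_on hab ((by fun_prop : Continuous _).intervalIntegrable _ _)
        ((by fun_prop : Continuous _).intervalIntegrable _ _) fun t _ => abs_two_mul_mul_le hε _ _
    _ = _ := by
      rw [intervalIntegral.integral_add, intervalIntegral.integral_const_mul,
        intervalIntegral.integral_const_mul] <;>
      exact Continuous.intervalIntegrable (by fun_prop) _ _

lemma abs_integral_sq_sub_mul_sq_le {v : ℝ → ℝ} (hv : ContDiff ℝ 1 v) {a b ε : ℝ} (hab : a ≤ b)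
    (hε : 0 < ε) :
    |(∫ t in a..b, v t ^ 2) - (b - a) * v b ^ 2| ≤
      (b - a) * (ε * (∫ t in a..b, v t ^ 2) + ε⁻¹ * ∫ t in a..b, deriv v t ^ 2) := by
  have hvc : Continuous v := hv.continuous
  have hv'c : Continuous (deriv v) := hv.continuous_deriv le_rfl
  have hpointwise : ∀ t ∈ Ι a b, ‖v t ^ 2 - v b ^ 2‖ ≤
      ε * (∫ t in a..b, v t ^ 2) + ε⁻¹ * ∫ t in a..b, deriv v t ^ 2 := by
    intro t ht
    rw [uIoc_of_le hab] at ht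
    rw [Real.norm_eq_abs, abs_sub_comm]
    refine (abs_sq_sub_sq_le_of_contDiff hv ht.2 hε).trans ?_
    gcongr
    · exact intervalIntegral.integral_mono_interval ht.1.le ht.2 le_rfl
        (ae_of_all _ fun x => sq_nonneg _) ((hvc.pow 2).intervalIntegrable _ _)
    · exact intervalIntegral.integral_mono_interval ht.1.le ht.2 le_rfl
        (ae_of_all _ fun x => sq_nonneg _) ((hv'c.pow 2).intervalIntegrable _ _)
  have hsub : ∫ t in a..b, (v t ^ 2 - v b ^ 2) = (∫ t in a..b, v t ^ 2) - (b - a) * v b ^ 2 := by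
    have hvi : IntervalIntegrable (fun t => v t ^ 2) volume a b :=
      (hvc.pow 2).intervalIntegrable _ _
    rw [intervalIntegral.integral_sub hvi intervalIntegrable_const,
      intervalIntegral.integral_const, smul_eq_mul]
  rw [← hsub, ← Real.norm_eq_abs, mul_comm (b - a), ← abs_of_nonneg (sub_nonneg.2 hab)]
  exact intervalIntegral.norm_integral_le_of_norm_le_const hpointwise

lemma intervalIntegral_le_integral_Iio {μ : Measure ℝ} [NullSingletonClass μ] {f : ℝ → ℝ}
    {a b : ℝ} (hf : IntegrableOn f (Iio b) μ) (hf0 : 0 ≤ f) (hab : a ≤ b) :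
    ∫ x in a..b, f x ∂μ ≤ ∫ x in Iio b, f x ∂μ := by
  rw [← intervalIntegral.integral_Iio_sub_Iio' hf (hf.mono_set (Iio_subset_Iio hab)),
    sub_le_self_iff]
  exact setIntegral_nonneg measurableSet_Iio fun x _ => hf0 x

lemma abs_sub_le_of_tail_bounds {c₀ C R s F₁ F₂ J V : ℝ} (hR : 0 < R) (hs : 0 < s)
    (hs1 : s ≤ 1) (hc₀ : 0 ≤ c₀) (hC : 0 ≤ C)
    (hF₁ : |F₁ - c₀ / R ^ 2| ≤ C * (s ^ 3 / R ^ 2))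
    (hF₂ : |F₂ - c₀ / (R + R * s ^ 2) ^ 2| ≤ C * (s ^ 3 / R ^ 2))
    (hJ : J ≤ C / R ^ 4)
    (hV : |(F₁ - F₂) - R * s ^ 2 * V| ≤ R * s ^ 2 * ((s * R)⁻¹ * (F₁ - F₂) + s * R * J)) :
    |V - 2 * c₀ / R ^ 3| ≤ (8 * c₀ + 5 * C) * (s / R ^ 3) := by
  set h := R * s ^ 2 with hh
  have hh0 : 0 < h := by positivity
  have hs3 : s ^ 3 ≤ s ^ 2 := pow_le_pow_of_le_one hs.le hs1 (by norm_num)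
  have hs4 : s ^ 4 ≤ s ^ 3 := pow_le_pow_of_le_one hs.le hs1 (by norm_num)
  have hI : |(F₁ - F₂) - 2 * c₀ * (s ^ 2 / R ^ 2)| ≤ (2 * C + 3 * c₀) * (s ^ 3 / R ^ 2) := by
    have hT := abs_one_div_sq_sub_one_div_sq_sub_le hR hh0.le
    calc |(F₁ - F₂) - 2 * c₀ * (s ^ 2 / R ^ 2)|
        = |(F₁ - c₀ / R ^ 2) - (F₂ - c₀ / (R + h) ^ 2)
            + c₀ * (1 / R ^ 2 - 1 / (R + h) ^ 2 - 2 * h / R ^ 3)| := by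
          congr 1; field_simp; ring
      _ ≤ C * (s ^ 3 / R ^ 2) + C * (s ^ 3 / R ^ 2) + c₀ * (3 * h ^ 2 / R ^ 4) := by
          refine (abs_add_le _ _).trans (add_le_add ((abs_sub _ _).trans (add_le_add hF₁ hF₂)) ?_)
          rw [abs_mul, abs_of_nonneg hc₀]
          exact mul_le_mul_of_nonneg_left hT hc₀
      _ ≤ (2 * C + 3 * c₀) * (s ^ 3 / R ^ 2) := by
          have hh4 : h ^ 2 / R ^ 4 = s ^ 4 / R ^ 2 := by rw [hh]; field_simp
          rw [mul_div_assoc, hh4]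
          nlinarith [div_le_div_of_nonneg_right hs4 (by positivity : (0:ℝ) ≤ R ^ 2)]
  have hmass : F₁ - F₂ ≤ (5 * c₀ + 2 * C) * (s ^ 2 / R ^ 2) := by
    have hs32 : s ^ 3 / R ^ 2 ≤ s ^ 2 / R ^ 2 := by gcongr
    linarith [(abs_le.1 hI).2,
      mul_le_mul_of_nonneg_left hs32 (by positivity : 0 ≤ 2 * C + 3 * c₀)]
  have hlocal : (s * R)⁻¹ * (F₁ - F₂) + s * R * J ≤ (5 * c₀ + 3 * C) * (s / R ^ 3) := by
    calc (s * R)⁻¹ * (F₁ - F₂) + s * R * J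
        ≤ (s * R)⁻¹ * ((5 * c₀ + 2 * C) * (s ^ 2 / R ^ 2)) + s * R * (C / R ^ 4) := by gcongr
      _ = (5 * c₀ + 3 * C) * (s / R ^ 3) := by field_simp; ring
  have hscaled : h * |V - 2 * c₀ / R ^ 3| ≤ h * ((8 * c₀ + 5 * C) * (s / R ^ 3)) := by
    calc h * |V - 2 * c₀ / R ^ 3| = |h * (V - 2 * c₀ / R ^ 3)| := by
          rw [abs_mul, abs_of_pos hh0]
      _ = |(F₁ - F₂ - 2 * c₀ * (s ^ 2 / R ^ 2)) - (F₁ - F₂ - h * V)| := by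
          congr 1; rw [hh]; field_simp; ring
      _ ≤ (2 * C + 3 * c₀) * (s ^ 3 / R ^ 2) + h * ((5 * c₀ + 3 * C) * (s / R ^ 3)) :=
          (abs_sub _ _).trans (add_le_add hI (hV.trans (by gcongr)))
      _ = h * ((8 * c₀ + 5 * C) * (s / R ^ 3)) := by rw [hh]; field_simp; ring
  exact le_of_mul_le_mul_left hscaled hh0

theorem pointwise_from_integral_decay_general (a₀ c₀ : ℝ) (ha₀ : 0 < a₀)
    (hc₀ : 0 < c₀) (v : ℝ → ℝ) (hv : ContDiff ℝ 1 v)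
    (R₀ C : ℝ) (hC : 0 < C)
    (hint : ∀ R : ℝ, R₀ ≤ R →
      IntegrableOn (fun x => (v x) ^ 2) (Set.Iio (-R)) ∧
      IntegrableOn (fun x => (deriv v x) ^ 2) (Set.Iio (-R)))
    (hL2 : ∀ R : ℝ, R₀ ≤ R →
      |(∫ x in Set.Iio (-R), (v x) ^ 2) - c₀ * R ^ (-(2 : ℝ))| ≤ C * R ^ (-(2 : ℝ) - a₀))
    (hL2' : ∀ R : ℝ, R₀ ≤ R →
      (∫ x in Set.Iio (-R), (deriv v x) ^ 2) ≤ C * R ^ (-(4 : ℝ))) :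
    ∃ R₁ C' : ℝ, 0 < R₁ ∧ 0 < C' ∧ ∀ R : ℝ, R₁ ≤ R →
      |(v (-R)) ^ 2 - 2 * c₀ * R ^ (-(3 : ℝ))| ≤ C' * R ^ (-(3 : ℝ) - a₀ / 3) := by
  refine ⟨max R₀ 1, 8 * c₀ + 5 * C, by positivity, by positivity, fun R hR => ?_⟩
  have hR₀R : R₀ ≤ R := le_of_max_le_left hR
  have hR1 : 1 ≤ R := le_of_max_le_right hR
  have hRpos : 0 < R := by linarith
  set s := R ^ (-a₀ / 3) with hs
  have hs1 : s ≤ 1 := Real.rpow_le_one_of_one_le_of_nonpos hR1 (by linarith)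
  have hpow : ∀ (n : ℕ) (b : ℝ), R ^ (-(n : ℝ) - b) = R ^ (-b) / R ^ n := fun n b => by
    rw [show -(n : ℝ) - b = -b - n by ring, Real.rpow_sub hRpos, Real.rpow_natCast]
  have hs3 : R ^ (-a₀) = s ^ 3 := by
    rw [hs, ← Real.rpow_natCast, ← Real.rpow_mul hRpos.le]; norm_num
  have hrate2 : R ^ (-(2 : ℝ) - a₀) = s ^ 3 / R ^ 2 := by simpa [hs3] using hpow 2 a₀
  have hrate3 : R ^ (-(3 : ℝ) - a₀ / 3) = s / R ^ 3 := by
    simpa [hs, neg_div] using hpow 3 (a₀ / 3)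
  set h := R * s ^ 2
  have hh : 0 ≤ h := by positivity
  have hRh : R₀ ≤ R + h := by linarith
  have hwindow : -(R + h) ≤ -R := by linarith
  have hmass := intervalIntegral.integral_Iio_sub_Iio' (hint R hR₀R).1 (hint (R + h) hRh).1
  have hV := abs_integral_sq_sub_mul_sq_le hv hwindow (inv_pos.2 (by positivity : 0 < s * R))
  rw [show -R - -(R + h) = h by ring, inv_inv, ← hmass] at hV
  have hJ := (intervalIntegral_le_integral_Iio (hint R hR₀R).2 (fun x => sq_nonneg _)
    hwindow).trans (hL2' R hR₀R)
  have hF₂ := (hL2 (R + h) hRh).trans (mul_le_mul_of_nonneg_left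
    (Real.rpow_le_rpow_of_nonpos hRpos (by linarith) (by linarith)) hC.le)
  rw [hrate2] at hF₂
  have key := abs_sub_le_of_tail_bounds hRpos (by positivity) hs1 hc₀.le hC.le
    (by simpa [hrate2, Real.rpow_neg_ofNat, div_eq_mul_inv] using hL2 R hR₀R)
    (by simpa [Real.rpow_neg_ofNat, div_eq_mul_inv] using hF₂)
    (by simpa [Real.rpow_neg_ofNat, div_eq_mul_inv] using hJ) hV
  rw [hrate3]
  simpa [Real.rpow_neg_ofNat, div_eq_mul_inv] using key

/-- From integral decay estimates to a pointwise asymptotic: if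
`∫_{x<−R} v² = c₀ R⁻² + O(R^{−2−a₀})` and `∫_{x<−R} v'² = O(R⁻⁴)`, then
`v(−R)² = 2 c₀ R⁻³ + O(R^{−3−a₀/3})`. -/
theorem pointwise_from_integral_decay (a₀ c₀ : ℝ) (ha₀ : 0 < a₀) (ha₀1 : a₀ < 1)
    (hc₀ : 0 < c₀) (v : ℝ → ℝ) (hv : ContDiff ℝ 1 v)
    (R₀ C : ℝ) (hR₀ : 0 < R₀) (hC : 0 < C)
    (hint : ∀ R : ℝ, R₀ ≤ R →
      IntegrableOn (fun x => (v x) ^ 2) (Set.Iio (-R)) ∧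
      IntegrableOn (fun x => (deriv v x) ^ 2) (Set.Iio (-R)))
    (hL2 : ∀ R : ℝ, R₀ ≤ R →
      |(∫ x in Set.Iio (-R), (v x) ^ 2) - c₀ * R ^ (-(2 : ℝ))| ≤ C * R ^ (-(2 : ℝ) - a₀))
    (hL2' : ∀ R : ℝ, R₀ ≤ R →
      (∫ x in Set.Iio (-R), (deriv v x) ^ 2) ≤ C * R ^ (-(4 : ℝ))) :
    ∃ R₁ C' : ℝ, 0 < R₁ ∧ 0 < C' ∧ ∀ R : ℝ, R₁ ≤ R →
      |(v (-R)) ^ 2 - 2 * c₀ * R ^ (-(3 : ℝ))| ≤ C' * R ^ (-(3 : ℝ) - a₀ / 3) :=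
  pointwise_from_integral_decay_general a₀ c₀ ha₀ hc₀ v hv R₀ C hC hint hL2 hL2'
end
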